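/- arXiv:1002.4187 — 5 statements merged into one kernel-verified Lean document; each statement's English description precedes it below -/
import Mathlib

section
/- For any Young diagram Y (a partition), the hook length formula difference: d/H_Y equals the sum over corners (x,y) of Y of 1/H_{Y minus (x,y)}, where d is the number of boxes of Y, H_Y is the product of all hook lengths of Y, and a corner is a box with no box below it nor to its right. -/
/-!
Describe the diagram by its row lengths `l 0 ≥ l 1 ≥ ⋯` on `r` rows and put
`β i = l i + (r - 1 - i)`; the `β i` are distinct. In row `i`, the hook lengths together with
the differences `β i - β j` for `i < j < r` are exactly `1, …, β i`, which gives Frobenius'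
form of the hook length formula `H_Y · ∏_{k < j} (β k - β j) = ∏ β i !`. Removing the corner
of row `i` lowers `β i` by one and leaves the other `β j` alone, so
`H_Y / H_{Y - corner} = β i · ∏_{j ≠ i} (β i - 1 - β j) / (β i - β j)`; this expression
vanishes for the rows without a corner. Summed over all rows it is the coefficient of
`X ^ (r - 1)` in the interpolation polynomial of `X ∏_j (X - β j - 1) - (X - r) ∏_j (X - β j)`
at the nodes `β i`, namely `∑ β i - r (r - 1) / 2`, and this is the number of boxes.
-/

def hookLen (c : Finset (ℕ × ℕ)) (u : ℕ × ℕ) : ℕ :=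
  (c.filter fun v => v.1 = u.1 ∧ u.2 ≤ v.2).card +
  (c.filter fun v => v.2 = u.2 ∧ u.1 < v.1).card

def hookProd (c : Finset (ℕ × ℕ)) : ℕ := ∏ u ∈ c, hookLen c u

open Finset Polynomial Function
open scoped Nat

theorem hookProd_pos (c : Finset (ℕ × ℕ)) : 0 < hookProd c :=
  prod_pos fun u hu => Nat.add_pos_left (card_pos.2 ⟨u, mem_filter.2 ⟨hu, rfl, le_rfl⟩⟩) _

theorem two_mul_coeff_prod_X_sub_C_of_card_eq_add_two {R ι : Type*} [CommRing R]
    (s : Finset ι) (f : ι → R) {k : ℕ} (hs : #s = k + 2) :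
    2 * (∏ i ∈ s, (X - C (f i))).coeff k = (∑ i ∈ s, f i) ^ 2 - ∑ i ∈ s, f i ^ 2 := by
  induction s using Finset.cons_induction generalizing k with
  | empty => simp at hs
  | cons a t ha ih =>
    rw [card_cons] at hs
    rw [prod_cons, sum_cons, sum_cons]
    cases k with
    | zero =>
      obtain ⟨b, rfl⟩ := card_eq_one.mp (by omega : #t = 1)
      simp only [prod_singleton, sum_singleton, coeff_zero_eq_eval_zero, eval_mul, eval_sub, eval_X,
        eval_C]
      ring
    | succ m =>
      have ht : #t = m + 2 := by omega
      have hlin : (∏ i ∈ t, (X - C (f i))).coeff (m + 1) = -∑ i ∈ t, f i :=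
        (by omega : #t - 1 = m + 1) ▸ prod_X_sub_C_coeff_card_pred t f (by omega)
      rw [coeff_X_sub_C_mul, hlin]
      linear_combination ih ht

theorem degree_X_mul_nodal_add_one_sub_lt {R ι : Type*} [CommRing R] [Nontrivial R]
    (s : Finset ι) (x : ι → R) :
    (X * Lagrange.nodal s (x · + 1) - (X - C (#s : R)) * Lagrange.nodal s x).degree <
      (#s : WithBot ℕ) := by
  set A := Lagrange.nodal s x
  set B := Lagrange.nodal s (x · + 1)
  have hA : A.natDegree = #s := Lagrange.natDegree_nodal
  have hB : B.natDegree = #s := Lagrange.natDegree_nodal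
  have hA_lead : A.coeff #s = 1 := hA ▸ Lagrange.nodal_monic.coeff_natDegree
  have hB_lead : B.coeff #s = 1 := hB ▸ Lagrange.nodal_monic.coeff_natDegree
  rw [degree_lt_iff_coeff_zero]
  intro m hm
  replace hm : #s ≤ m := by exact_mod_cast hm
  rcases m with _ | m
  · simp [A, B, card_eq_zero.1 (Nat.le_zero.1 hm)]
  simp only [coeff_sub, coeff_X_mul, coeff_X_sub_C_mul]
  obtain hm | rfl | hm : m + 1 = #s ∨ m = #s ∨ #s < m := by omega
  · have hA_next : A.coeff m = -∑ i ∈ s, x i :=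
      (by omega : #s - 1 = m) ▸ prod_X_sub_C_coeff_card_pred s x (by omega)
    have hB_next : B.coeff m = -∑ i ∈ s, (x i + 1) :=
      (by omega : #s - 1 = m) ▸ prod_X_sub_C_coeff_card_pred s (x · + 1) (by omega)
    rw [hm, hA_lead, hA_next, hB_next, sum_add_distrib, sum_const, nsmul_one]
    ring
  · rw [hA_lead, hB_lead, coeff_eq_zero_of_natDegree_lt (by omega : A.natDegree < #s + 1)]
    ring
  · rw [coeff_eq_zero_of_natDegree_lt (by omega : A.natDegree < m),
      coeff_eq_zero_of_natDegree_lt (by omega : B.natDegree < m),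
      coeff_eq_zero_of_natDegree_lt (by omega : A.natDegree < m + 1)]
    ring

theorem sum_mul_prod_sub_one_div_sub {K ι : Type*} [Field K] [NeZero (2 : K)] [DecidableEq ι]
    (s : Finset ι) (x : ι → K) (hx : Set.InjOn x s) :
    ∑ i ∈ s, x i * ∏ j ∈ s.erase i, (x i - 1 - x j) / (x i - x j) =
      ∑ i ∈ s, x i - ((#s).choose 2 : K) := by
  rcases hs : #s with _ | _ | k
  · simp [card_eq_zero.mp hs]
  · obtain ⟨a, rfl⟩ := card_eq_one.mp hs
    simp
  set A := Lagrange.nodal s x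
  set B := Lagrange.nodal s (x · + 1)
  set P := X * B - (X - C (#s : K)) * A
  have hterm : ∀ i ∈ s, P.eval (x i) / ∏ j ∈ s.erase i, (x i - x j) =
      -(x i * ∏ j ∈ s.erase i, (x i - 1 - x j) / (x i - x j)) := by
    intro i hi
    have hPi : P.eval (x i) = x i * ∏ j ∈ s, (x i - (x j + 1)) := by
      simp [P, A, B, Lagrange.eval_nodal_at_node hi, Lagrange.eval_nodal]
    rw [hPi, ← mul_prod_erase s _ hi, prod_div_distrib]
    ring_nf
  have hcoeff : P.coeff (#s - 1) = _ :=
    Lagrange.coeff_eq_sum hx (degree_X_mul_nodal_add_one_sub_lt s x)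
  rw [sum_congr rfl hterm, sum_neg_distrib, hs] at hcoeff
  have hA_next : A.coeff (k + 1) = -∑ i ∈ s, x i :=
    (by omega : #s - 1 = k + 1) ▸ prod_X_sub_C_coeff_card_pred s x (by omega)
  simp only [P, Nat.add_sub_cancel, coeff_sub, coeff_X_mul, coeff_X_sub_C_mul, hA_next] at hcoeff
  have hA_two : 2 * A.coeff k = _ := two_mul_coeff_prod_X_sub_C_of_card_eq_add_two s x hs
  have hB_two : 2 * B.coeff k = _ :=
    two_mul_coeff_prod_X_sub_C_of_card_eq_add_two s (x · + 1) hs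
  simp only [sum_add_distrib, sum_const, hs, nsmul_eq_mul, mul_one, add_sq, ← mul_sum] at hB_two
  have hchoose : 2 * ((#s).choose 2 : K) = #s * (#s - 1) := by
    rw [Nat.cast_choose_two]
    field_simp
  rw [hs] at hcoeff hchoose
  push_cast at hcoeff hchoose hB_two
  refine mul_left_cancel₀ (two_ne_zero : (2 : K) ≠ 0) ?_
  linear_combination 2 * hcoeff + hA_two - hB_two + hchoose

theorem prod_prod_sub_update_mul {R : Type*} [CommRing R] (b : ℕ → R) {r i : ℕ} (hi : i < r)
    (t : R) :
    (∏ j ∈ range r, ∏ k ∈ range j, (update b i t k - update b i t j)) *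
        ∏ j ∈ (range r).erase i, (b i - b j) =
      (∏ j ∈ range r, ∏ k ∈ range j, (b k - b j)) *
        ∏ j ∈ (range r).erase i, (t - b j) := by
  induction r with
  | zero => simp at hi
  | succ r ih =>
    rw [prod_range_succ, prod_range_succ (fun j => ∏ k ∈ range j, (b k - b j))]
    obtain rfl | hir := (Nat.lt_succ_iff.1 hi).eq_or_lt
    · have hD : ∏ j ∈ range i, ∏ k ∈ range j, (update b i t k - update b i t j) =
          ∏ j ∈ range i, ∏ k ∈ range j, (b k - b j) :=
        prod_congr rfl fun j hj => prod_congr rfl fun k hk => by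
          simp only [mem_range] at hj hk
          rw [update_of_ne (by omega), update_of_ne (by omega)]
      have hrow :
          ∏ k ∈ range i, (update b i t k - update b i t i) = ∏ k ∈ range i, (b k - t) :=
        prod_congr rfl fun k hk => by
          rw [update_self, update_of_ne (by simp at hk; omega)]
      have hswap : (∏ k ∈ range i, (b k - t)) * ∏ k ∈ range i, (b i - b k) =
          (∏ k ∈ range i, (b k - b i)) * ∏ k ∈ range i, (t - b k) := by
        rw [← prod_mul_distrib, ← prod_mul_distrib]
        exact prod_congr rfl fun k _ => by ring
      rw [hD, hrow, range_add_one, erase_insert notMem_range_self]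
      linear_combination (∏ j ∈ range i, ∏ k ∈ range j, (b k - b j)) * hswap
    · have hrow (c : R) : ∏ k ∈ range r, (update b i c k - b r) =
          (c - b r) * ∏ k ∈ (range r).erase i, (b k - b r) := by
        rw [← mul_prod_erase _ _ (mem_range.2 hir), update_self]
        congr 1
        exact prod_congr rfl fun k hk => by rw [update_of_ne (ne_of_mem_erase hk)]
      have hrow_self := hrow (b i)
      rw [update_eq_self] at hrow_self
      rw [update_of_ne hir.ne', hrow, hrow_self, range_add_one, erase_insert_of_ne hir.ne',
        prod_insert (by simp), prod_insert (by simp)]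
      linear_combination
        (t - b r) * (∏ k ∈ (range r).erase i, (b k - b r)) * (b i - b r) * ih hir

def cellsOf (l : ℕ → ℕ) (r : ℕ) : Finset (ℕ × ℕ) :=
  (range r).biUnion fun i => {i} ×ˢ range (l i)

def betaNumber (l : ℕ → ℕ) (r i : ℕ) : ℕ := l i + (r - 1 - i)

def hookComplement (l : ℕ → ℕ) (r i x : ℕ) : ℕ := x + #{j ∈ Ioo i r | l j ≤ x}

section RowLengths

variable {l : ℕ → ℕ} {r : ℕ}

@[simp]
theorem mem_cellsOf {u : ℕ × ℕ} : u ∈ cellsOf l r ↔ u.1 < r ∧ u.2 < l u.1 := by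
  obtain ⟨a, b⟩ := u
  simp [cellsOf]

theorem card_cellsOf : #(cellsOf l r) = ∑ i ∈ range r, l i := by
  rw [card_eq_sum_ones, sum_finset_product (cellsOf l r) (range r) (fun i => range (l i)) (by simp)]
  simp

theorem sum_betaNumber : ∑ i ∈ range r, betaNumber l r i = #(cellsOf l r) + r.choose 2 := by
  simp only [betaNumber, sum_add_distrib, card_cellsOf, sum_range_reflect (fun i => i) r,
    sum_range_id, Nat.choose_two_right]

theorem strictAntiOn_betaNumber (hl : Antitone l) :
    StrictAntiOn (betaNumber l r) (Set.Iio r) := by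
  intro i _ j hj hij
  have := hl hij.le
  simp only [Set.mem_Iio] at hj
  unfold betaNumber
  omega

theorem hookLen_cellsOf {i : ℕ} (hi : i < r) (x : ℕ) :
    hookLen (cellsOf l r) (i, x) = (l i - x) + #{j ∈ Ioo i r | x < l j} := by
  have harm : {v ∈ cellsOf l r | v.1 = i ∧ x ≤ v.2} = {i} ×ˢ Ico x (l i) := by
    ext ⟨a, c⟩
    simp only [mem_filter, mem_cellsOf, mem_product, mem_singleton, mem_Ico]
    constructor
    · rintro ⟨⟨-, hc⟩, rfl, hxc⟩
      exact ⟨rfl, hxc, hc⟩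
    · rintro ⟨rfl, hxc, hc⟩
      exact ⟨⟨hi, hc⟩, rfl, hxc⟩
  have hleg : {v ∈ cellsOf l r | v.2 = x ∧ i < v.1} = {j ∈ Ioo i r | x < l j} ×ˢ {x} := by
    ext ⟨a, c⟩
    simp only [mem_filter, mem_cellsOf, mem_product, mem_singleton, mem_Ioo]
    constructor
    · rintro ⟨⟨ha, hc⟩, rfl, hia⟩
      exact ⟨⟨⟨hia, ha⟩, hc⟩, rfl⟩
    · rintro ⟨⟨⟨hia, ha⟩, hc⟩, rfl⟩
      exact ⟨⟨ha, hc⟩, rfl, hia⟩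
  simp only [hookLen, harm, hleg, card_product, card_singleton, Nat.card_Ico, one_mul, mul_one]

theorem hookLen_add_hookComplement {i x : ℕ} (hi : i < r) (hx : x < l i) :
    hookLen (cellsOf l r) (i, x) + hookComplement l r i x = betaNumber l r i := by
  have hsplit := card_filter_add_card_filter_not (s := Ioo i r) (fun j => x < l j)
  simp only [not_lt, Nat.card_Ioo] at hsplit
  rw [hookLen_cellsOf hi, hookComplement, betaNumber]
  omega

theorem hookComplement_strictMono (i : ℕ) : StrictMono (hookComplement l r i) := by
  intro x y hxy
  have : #{j ∈ Ioo i r | l j ≤ x} ≤ #{j ∈ Ioo i r | l j ≤ y} :=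
    card_le_card (monotone_filter_right _ fun _ _ hj => hj.trans hxy.le)
  unfold hookComplement
  omega

theorem hookComplement_lt_betaNumber {i x : ℕ} (hx : x < l i) :
    hookComplement l r i x < betaNumber l r i := by
  have := card_filter_le (Ioo i r) (fun j => l j ≤ x)
  rw [Nat.card_Ioo] at this
  unfold hookComplement betaNumber
  omega

theorem hookComplement_ne_betaNumber (hl : Antitone l) {i j : ℕ} (hij : i < j) (hj : j < r)
    (x : ℕ) : hookComplement l r i x ≠ betaNumber l r j := by
  unfold hookComplement betaNumber
  rcases lt_or_ge x (l j) with hxj | hjx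
  · have hsub : {k ∈ Ioo i r | l k ≤ x} ⊆ Ioo j r := fun k hk => by
      simp only [mem_filter, mem_Ioo] at hk ⊢
      exact ⟨lt_of_not_ge fun hkj => (hl hkj).not_gt (hk.2.trans_lt hxj), hk.1.2⟩
    have := card_le_card hsub
    rw [Nat.card_Ioo] at this
    omega
  · have hsub : Ico j r ⊆ {k ∈ Ioo i r | l k ≤ x} := fun k hk => by
      simp only [mem_filter, mem_Ioo, mem_Ico] at hk ⊢
      exact ⟨⟨hij.trans_le hk.1, hk.2⟩, (hl hk.1).trans hjx⟩
    have := card_le_card hsub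
    rw [Nat.card_Ico] at this
    omega

theorem prod_hookLen_row_mul_prod_sub (hl : Antitone l) {i : ℕ} (hi : i < r) :
    (∏ x ∈ range (l i), hookLen (cellsOf l r) (i, x)) *
      ∏ j ∈ Ioo i r, (betaNumber l r i - betaNumber l r j) = (betaNumber l r i)! := by
  set β := betaNumber l r
  set S := (range (l i)).image (hookComplement l r i)
  set T := (Ioo i r).image β
  have hβ : Set.InjOn β (Ioo i r) :=
    (strictAntiOn_betaNumber hl).injOn.mono fun j hj => (mem_Ioo.1 hj).2
  have hdisj : Disjoint S T := by
    simp only [S, T, disjoint_left, mem_image, mem_Ioo, not_exists, not_and]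
    rintro _ ⟨x, -, rfl⟩ j ⟨hij, hj⟩ h
    exact hookComplement_ne_betaNumber hl hij hj x h.symm
  have hunion : S ∪ T = range (β i) := by
    refine eq_of_subset_of_card_le (union_subset ?_ ?_) ?_
    · simp only [S, subset_iff, mem_image, mem_range]
      rintro _ ⟨x, hx, rfl⟩
      exact hookComplement_lt_betaNumber hx
    · simp only [T, subset_iff, mem_image, mem_Ioo, mem_range]
      rintro _ ⟨j, ⟨hij, hj⟩, rfl⟩
      exact strictAntiOn_betaNumber hl hi hj hij
    · rw [card_union_of_disjoint hdisj,
        card_image_of_injective _ (hookComplement_strictMono i).injective,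
        card_image_of_injOn hβ, card_range, card_range, Nat.card_Ioo]
      simp only [β, betaNumber]
      omega
  calc (∏ x ∈ range (l i), hookLen (cellsOf l r) (i, x)) * ∏ j ∈ Ioo i r, (β i - β j)
      = (∏ v ∈ S, (β i - v)) * ∏ v ∈ T, (β i - v) := by
        rw [prod_image (hookComplement_strictMono i).injective.injOn, prod_image hβ]
        congr 1
        refine prod_congr rfl fun x hx => ?_
        have : _ + _ = β i := hookLen_add_hookComplement hi (mem_range.1 hx)
        omega
    _ = ∏ v ∈ range (β i), (β i - v) := by rw [← prod_union hdisj, hunion]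
    _ = (β i)! := by rw [← Nat.descFactorial_eq_prod_range, Nat.descFactorial_self]

theorem hookProd_cellsOf_mul_prod_prod_Ioo_sub (hl : Antitone l) :
    hookProd (cellsOf l r) *
        ∏ i ∈ range r, ∏ j ∈ Ioo i r, (betaNumber l r i - betaNumber l r j) =
      ∏ i ∈ range r, (betaNumber l r i)! := by
  rw [hookProd, prod_finset_product (cellsOf l r) (range r) (fun i => range (l i)) (by simp),
    ← prod_mul_distrib]
  exact prod_congr rfl fun i hi => prod_hookLen_row_mul_prod_sub hl (mem_range.1 hi)

theorem cast_hookProd_cellsOf_mul_prod_prod_sub {R : Type*} [CommRing R] (hl : Antitone l) :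
    (hookProd (cellsOf l r) : R) *
        ∏ j ∈ range r, ∏ k ∈ range j, ((betaNumber l r k : R) - betaNumber l r j) =
      ∏ k ∈ range r, ((betaNumber l r k)! : R) := by
  have h := congrArg (Nat.cast : ℕ → R) (hookProd_cellsOf_mul_prod_prod_Ioo_sub hl (r := r))
  push_cast at h
  rw [← h, prod_comm' (s := range r) (t := fun i => Ioo i r) (s' := range) (t' := range r)
    (fun x y => by simp only [mem_range, mem_Ioo]; omega)]
  refine congrArg _ (prod_congr rfl fun j hj => prod_congr rfl fun k hk => ?_)
  simp only [mem_range] at hj hk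
  rw [Nat.cast_sub (strictAntiOn_betaNumber hl (hk.trans hj) hj hk).le]

theorem cellsOf_erase (i : ℕ) :
    (cellsOf l r).erase (i, l i - 1) = cellsOf (update l i (l i - 1)) r := by
  ext ⟨a, c⟩
  rcases eq_or_ne a i with rfl | ha
  · simp only [mem_erase, mem_cellsOf, update_self, ne_eq, Prod.mk.injEq, true_and]
    omega
  · simp [ha]

theorem antitone_update_sub_one (hl : Antitone l) {i : ℕ} (hcorner : l (i + 1) < l i) :
    Antitone (update l i (l i - 1)) := by
  intro a b hab
  simp only [update_apply]
  split_ifs with hb ha ha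
  · omega
  · subst hb
    have := hl hab
    omega
  · subst ha
    have := hl (show a + 1 ≤ b by omega)
    omega
  · exact hl hab

theorem betaNumber_update {i : ℕ} (hi : 0 < l i) :
    betaNumber (update l i (l i - 1)) r = update (betaNumber l r) i (betaNumber l r i - 1) := by
  funext k
  rcases eq_or_ne k i with rfl | hk
  · simp only [betaNumber, update_self]
    omega
  · simp [betaNumber, hk]

theorem prod_factorial_betaNumber_update_mul {i : ℕ} (hi : i < r) (hpos : 0 < l i) :
    (∏ k ∈ range r, (betaNumber (update l i (l i - 1)) r k)!) * betaNumber l r i =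
      ∏ k ∈ range r, (betaNumber l r k)! := by
  have hβ : betaNumber l r i ≠ 0 := by
    unfold betaNumber
    omega
  rw [betaNumber_update hpos, ← mul_prod_erase _ _ (mem_range.2 hi),
    ← mul_prod_erase (range r) (fun k => (betaNumber l r k)!) (mem_range.2 hi), update_self,
    prod_congr rfl fun k hk => by rw [update_of_ne (ne_of_mem_erase hk)],
    ← Nat.mul_factorial_pred hβ]
  ring

theorem hookProd_div_hookProd_erase {K : Type*} [Field K] [CharZero K] (hl : Antitone l)
    {i : ℕ} (hi : i < r) (hcorner : l (i + 1) < l i) :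
    (hookProd (cellsOf l r) : K) / hookProd ((cellsOf l r).erase (i, l i - 1)) =
      betaNumber l r i * ∏ j ∈ (range r).erase i,
        ((betaNumber l r i : K) - 1 - betaNumber l r j) /
          (betaNumber l r i - betaNumber l r j) := by
  have hpos : 0 < l i := by omega
  set b : ℕ → K := fun k => (betaNumber l r k : K)
  have hb' (k : ℕ) : (betaNumber (update l i (l i - 1)) r k : K) = update b i (b i - 1) k := by
    rw [betaNumber_update hpos, apply_update (fun _ (n : ℕ) => (n : K)),
      Nat.cast_sub (by simp only [betaNumber]; omega), Nat.cast_one]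
  have hH := cast_hookProd_cellsOf_mul_prod_prod_sub (R := K) hl (r := r)
  have hH' := cast_hookProd_cellsOf_mul_prod_prod_sub (R := K)
    (antitone_update_sub_one hl hcorner) (r := r)
  rw [← cellsOf_erase i] at hH'
  simp only [hb'] at hH'
  have hF := congrArg (Nat.cast : ℕ → K) (prod_factorial_betaNumber_update_mul hi hpos)
  push_cast at hF
  have hD := prod_prod_sub_update_mul b hi (b i - 1)
  have hN : ∏ j ∈ (range r).erase i, (b i - b j) ≠ 0 := by
    refine prod_ne_zero_iff.2 fun j hj => sub_ne_zero.2 fun h => (ne_of_mem_erase hj).symm ?_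
    exact (strictAntiOn_betaNumber hl).injOn hi (mem_range.1 (mem_of_mem_erase hj))
      (Nat.cast_injective h)
  have hHD' : ∏ k ∈ range r, ((betaNumber (update l i (l i - 1)) r k)! : K) ≠ 0 :=
    prod_ne_zero_iff.2 fun k _ => Nat.cast_ne_zero.2 (Nat.factorial_ne_zero _)
  rw [← hH'] at hHD'
  rw [prod_div_distrib, div_eq_iff (left_ne_zero_of_mul hHD'), mul_div_assoc',
    div_mul_eq_mul_div, eq_div_iff hN]
  refine mul_right_cancel₀ (right_ne_zero_of_mul hHD') ?_
  linear_combination (hookProd (cellsOf l r) : K) * hD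
    + (∏ j ∈ (range r).erase i, (b i - 1 - b j)) * (hH - b i * hH' - hF)

theorem filter_corner_cellsOf (hr : l r = 0) :
    (cellsOf l r).filter
        (fun u => (u.1 + 1, u.2) ∉ cellsOf l r ∧ (u.1, u.2 + 1) ∉ cellsOf l r) =
      {i ∈ range r | l (i + 1) < l i}.image fun i => (i, l i - 1) := by
  ext ⟨a, c⟩
  simp only [mem_filter, mem_cellsOf, mem_image, mem_range, Prod.mk.injEq]
  constructor
  · rintro ⟨⟨ha, hc⟩, hbelow, hright⟩
    refine ⟨a, ⟨ha, ?_⟩, rfl, by omega⟩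
    rcases (show a + 1 ≤ r from ha).eq_or_lt with hra | hra
    · rw [hra, hr]
      omega
    · omega
  · rintro ⟨i, ⟨hi, hcorner⟩, rfl, rfl⟩
    omega

-- A row without a corner has `β (i + 1) = β i - 1`, or it is an empty last row with `β i = 0`.
theorem betaNumber_mul_prod_eq_zero_of_not_corner {K : Type*} [Field K] (hl : Antitone l)
    (hr : l r = 0) {i : ℕ} (hi : i < r) (hflat : ¬ l (i + 1) < l i) :
    (betaNumber l r i : K) * ∏ j ∈ (range r).erase i,
        ((betaNumber l r i : K) - 1 - betaNumber l r j) /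
          (betaNumber l r i - betaNumber l r j) = 0 := by
  have heq : l (i + 1) = l i := le_antisymm (hl (Nat.le_succ i)) (not_lt.1 hflat)
  rcases (show i + 1 ≤ r from hi).eq_or_lt with hri | hri
  · have : betaNumber l r i = 0 := by
      rw [betaNumber, ← heq, hri, hr]
      omega
    simp [this]
  · have : betaNumber l r i = betaNumber l r (i + 1) + 1 := by
      rw [betaNumber, betaNumber, heq]
      omega
    refine mul_eq_zero_of_right _ (prod_eq_zero (i := i + 1) (by simp [hri]) ?_)
    simp [this]

theorem card_div_hookProd_cellsOf_eq_sum {K : Type*} [Field K] [CharZero K] (hl : Antitone l)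
    (hr : l r = 0) :
    (#(cellsOf l r) : K) / hookProd (cellsOf l r) =
      ∑ i ∈ range r with l (i + 1) < l i,
        1 / (hookProd ((cellsOf l r).erase (i, l i - 1)) : K) := by
  set b : ℕ → K := fun k => (betaNumber l r k : K)
  have hH : (hookProd (cellsOf l r) : K) ≠ 0 := Nat.cast_ne_zero.2 (hookProd_pos _).ne'
  have hb : Set.InjOn b (range r) := fun i hi j hj h =>
    (strictAntiOn_betaNumber hl).injOn (mem_range.1 hi) (mem_range.1 hj) (Nat.cast_injective h)
  have hvanish : ∀ i ∈ range r,
      b i * ∏ j ∈ (range r).erase i, (b i - 1 - b j) / (b i - b j) ≠ 0 → l (i + 1) < l i :=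
    fun i hi => not_imp_comm.1 (betaNumber_mul_prod_eq_zero_of_not_corner hl hr (mem_range.1 hi))
  calc (#(cellsOf l r) : K) / hookProd (cellsOf l r)
      = (∑ i ∈ range r, b i - (#(range r)).choose 2) / hookProd (cellsOf l r) := by
        rw [card_range, ← Nat.cast_sum, sum_betaNumber]
        push_cast
        ring
    _ = (∑ i ∈ range r with l (i + 1) < l i,
          b i * ∏ j ∈ (range r).erase i, (b i - 1 - b j) / (b i - b j)) /
          hookProd (cellsOf l r) := by
        rw [← sum_mul_prod_sub_one_div_sub _ _ hb, sum_filter_of_ne hvanish]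
    _ = _ := by
        rw [sum_div]
        refine sum_congr rfl fun i hi => ?_
        rw [mem_filter, mem_range] at hi
        rw [← hookProd_div_hookProd_erase hl hi.1 hi.2, div_div_cancel_left' hH, one_div]

end RowLengths

theorem YoungDiagram.cells_eq_cellsOf (Y : YoungDiagram) :
    Y.cells = cellsOf Y.rowLen (Y.colLen 0) := by
  ext ⟨i, j⟩
  simp only [mem_cellsOf, YoungDiagram.mem_cells, YoungDiagram.mem_iff_lt_rowLen, iff_and_self]
  intro h
  exact YoungDiagram.mem_iff_lt_colLen.1 ((YoungDiagram.mem_iff_lt_rowLen (j := 0)).2 (by omega))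

theorem YoungDiagram.rowLen_colLen_zero (Y : YoungDiagram) : Y.rowLen (Y.colLen 0) = 0 :=
  Nat.eq_zero_of_not_pos fun h =>
    lt_irrefl _ (YoungDiagram.mem_iff_lt_colLen.1 (YoungDiagram.mem_iff_lt_rowLen.2 h))

/-- Hook length formula identity: for a Young diagram `Y` with `d` boxes,
`d / H_Y = ∑_{corners (x,y)} 1 / H_{Y - (x,y)}`. -/
theorem card_div_hookProd_eq_sum_corners (Y : YoungDiagram) :
    (Y.cells.card : ℚ) / hookProd Y.cells =
    ∑ u ∈ Y.cells.filter fun u => (u.1 + 1, u.2) ∉ Y.cells ∧ (u.1, u.2 + 1) ∉ Y.cells,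
      (1 : ℚ) / hookProd (Y.cells.erase u) := by
  rw [Y.cells_eq_cellsOf, filter_corner_cellsOf Y.rowLen_colLen_zero,
    sum_image fun i _ j _ h => (Prod.mk.inj h).1]
  exact card_div_hookProd_cellsOf_eq_sum (fun _ _ h => Y.rowLen_anti _ _ h) Y.rowLen_colLen_zero
end

section
/- For any Young diagram Y, twice the sum of the contents of the boxes of Y divided by H_Y equals the sum over corners (x,y) of Y of (y - x)/H_{Y minus (x,y)}. -/
open Finset

private lemma key {ι : Type*} [DecidableEq ι] (v : ι → ℚ) (s : Finset ι)
    (hv : ∀ i ∈ s, ∀ j ∈ s, i ≠ j → v i ≠ v j) :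
    ∀ b : ℚ, (∀ i ∈ s, v i ≠ b) →
    ∏ i ∈ s, (b - 1 - v i) / (b - v i) =
      1 + ∑ x ∈ s, (∏ i ∈ s.erase x, (v x - 1 - v i) / (v x - v i)) / (v x - b) := by
  induction s using Finset.induction_on with
  | empty => simp
  | @insert a s ha ih =>
    intro b hb
    have hva : ∀ i ∈ s, v i ≠ v a := fun i hi =>
      hv i (mem_insert_of_mem hi) a (mem_insert_self a s) (fun h => ha (h ▸ hi))
    have hvs : ∀ i ∈ s, ∀ j ∈ s, i ≠ j → v i ≠ v j := fun i hi j hj =>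
      hv i (mem_insert_of_mem hi) j (mem_insert_of_mem hj)
    have hbs : ∀ i ∈ s, v i ≠ b := fun i hi => hb i (mem_insert_of_mem hi)
    have hab : v a ≠ b := hb a (mem_insert_self a s)
    have IHb := ih hvs b hbs
    have IHc := ih hvs (v a) hva
    have h3 : b - v a ≠ 0 := sub_ne_zero.2 (fun h => hab h.symm)
    have step : ∀ x ∈ s,
        (∏ i ∈ (insert a s).erase x, (v x - 1 - v i) / (v x - v i)) / (v x - b)
        = (b - 1 - v a)/(b - v a) * ((∏ i ∈ s.erase x, (v x - 1 - v i) / (v x - v i)) / (v x - b))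
          + (1/(b - v a)) * ((∏ i ∈ s.erase x, (v x - 1 - v i) / (v x - v i)) / (v x - v a)) := by
      intro x hx
      rw [Finset.erase_insert_of_ne (fun h => ha (by rw [h]; exact hx)),
        prod_insert (fun h => ha (Finset.mem_of_mem_erase h))]
      have h1 : v x - v a ≠ 0 := sub_ne_zero.2 (hva x hx)
      have h2 : v x - b ≠ 0 := sub_ne_zero.2 (hbs x hx)
      generalize (∏ i ∈ s.erase x, (v x - 1 - v i) / (v x - v i)) = P
      field_simp
      ring
    have hsum : ∑ x ∈ s, (∏ i ∈ (insert a s).erase x, (v x - 1 - v i) / (v x - v i)) / (v x - b)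
        = (b - 1 - v a)/(b - v a) * ((∏ i ∈ s, (b - 1 - v i) / (b - v i)) - 1)
          + (1/(b - v a)) * ((∏ i ∈ s, (v a - 1 - v i) / (v a - v i)) - 1) := by
      rw [Finset.sum_congr rfl step, Finset.sum_add_distrib, ← Finset.mul_sum, ← Finset.mul_sum]
      congr 2
      · rw [IHb]; ring
      · rw [IHc]; ring
    rw [prod_insert ha, sum_insert ha, Finset.erase_insert ha, hsum]
    generalize (∏ i ∈ s, (b - 1 - v i) / (b - v i)) = P at IHb ⊢
    generalize (∏ i ∈ s, (v a - 1 - v i) / (v a - v i)) = Q at IHc ⊢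
    have h4 : v a - b ≠ 0 := sub_ne_zero.2 hab
    field_simp
    ring

private lemma U0 {ι : Type*} [DecidableEq ι] (v : ι → ℚ) (s : Finset ι)
    (hv : ∀ i ∈ s, ∀ j ∈ s, i ≠ j → v i ≠ v j) :
    ∑ x ∈ s, ∏ i ∈ s.erase x, (v x - 1 - v i) / (v x - v i) = s.card := by
  induction s using Finset.induction_on with
  | empty => simp
  | @insert a s ha ih =>
    have hva : ∀ i ∈ s, v i ≠ v a := fun i hi =>
      hv i (mem_insert_of_mem hi) a (mem_insert_self a s) (fun h => ha (h ▸ hi))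
    have hvs : ∀ i ∈ s, ∀ j ∈ s, i ≠ j → v i ≠ v j := fun i hi j hj =>
      hv i (mem_insert_of_mem hi) j (mem_insert_of_mem hj)
    have hkey := key v s hvs (v a) hva
    have hexp : ∀ x ∈ s, (∏ i ∈ (insert a s).erase x, (v x - 1 - v i)/(v x - v i))
        = (∏ i ∈ s.erase x, (v x - 1 - v i)/(v x - v i))
          - (∏ i ∈ s.erase x, (v x - 1 - v i)/(v x - v i))/(v x - v a) := by
      intro x hx
      rw [Finset.erase_insert_of_ne (fun h => ha (by rw [h]; exact hx)),
        prod_insert (fun h => ha (Finset.mem_of_mem_erase h))]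
      have h1 : v x - v a ≠ 0 := sub_ne_zero.2 (hva x hx)
      generalize (∏ i ∈ s.erase x, (v x - 1 - v i) / (v x - v i)) = P
      field_simp
      ring
    rw [sum_insert ha, Finset.erase_insert ha, Finset.sum_congr rfl hexp,
      Finset.sum_sub_distrib, ih hvs]
    have e1 : ∑ x ∈ s, (∏ i ∈ s.erase x, (v x - 1 - v i) / (v x - v i)) / (v x - v a)
        = (∏ i ∈ s, (v a - 1 - v i) / (v a - v i)) - 1 := by rw [hkey]; ring
    rw [e1, card_insert_of_notMem ha]
    push_cast
    ring

private lemma U1 {ι : Type*} [DecidableEq ι] (v : ι → ℚ) (s : Finset ι)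
    (hv : ∀ i ∈ s, ∀ j ∈ s, i ≠ j → v i ≠ v j) :
    ∑ x ∈ s, v x * ∏ i ∈ s.erase x, (v x - 1 - v i) / (v x - v i)
      = (∑ i ∈ s, v i) - (s.card : ℚ) * (s.card - 1) / 2 := by
  induction s using Finset.induction_on with
  | empty => simp
  | @insert a s ha ih =>
    have hva : ∀ i ∈ s, v i ≠ v a := fun i hi =>
      hv i (mem_insert_of_mem hi) a (mem_insert_self a s) (fun h => ha (h ▸ hi))
    have hvs : ∀ i ∈ s, ∀ j ∈ s, i ≠ j → v i ≠ v j := fun i hi j hj =>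
      hv i (mem_insert_of_mem hi) j (mem_insert_of_mem hj)
    have hkey := key v s hvs (v a) hva
    have h0 := U0 v s hvs
    have hexp : ∀ x ∈ s, v x * (∏ i ∈ (insert a s).erase x, (v x - 1 - v i)/(v x - v i))
        = (v x * (∏ i ∈ s.erase x, (v x - 1 - v i)/(v x - v i))
            - (∏ i ∈ s.erase x, (v x - 1 - v i)/(v x - v i)))
          - v a * ((∏ i ∈ s.erase x, (v x - 1 - v i)/(v x - v i))/(v x - v a)) := by
      intro x hx
      rw [Finset.erase_insert_of_ne (fun h => ha (by rw [h]; exact hx)),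
        prod_insert (fun h => ha (Finset.mem_of_mem_erase h))]
      have h1 : v x - v a ≠ 0 := sub_ne_zero.2 (hva x hx)
      generalize (∏ i ∈ s.erase x, (v x - 1 - v i) / (v x - v i)) = P
      field_simp
      ring
    rw [sum_insert ha, Finset.erase_insert ha, Finset.sum_congr rfl hexp,
      Finset.sum_sub_distrib, Finset.sum_sub_distrib, ih hvs, h0, ← Finset.mul_sum]
    have e1 : ∑ x ∈ s, (∏ i ∈ s.erase x, (v x - 1 - v i) / (v x - v i)) / (v x - v a)
        = (∏ i ∈ s, (v a - 1 - v i) / (v a - v i)) - 1 := by rw [hkey]; ring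
    rw [e1, sum_insert ha, card_insert_of_notMem ha]
    push_cast
    ring

private lemma U2 {ι : Type*} [DecidableEq ι] (v : ι → ℚ) (s : Finset ι)
    (hv : ∀ i ∈ s, ∀ j ∈ s, i ≠ j → v i ≠ v j) :
    ∑ x ∈ s, v x ^ 2 * ∏ i ∈ s.erase x, (v x - 1 - v i) / (v x - v i)
      = (∑ i ∈ s, (v i)^2) - ((s.card : ℚ) - 1) * (∑ i ∈ s, v i)
        + (s.card : ℚ) * (s.card - 1) * (s.card - 2) / 6 := by
  induction s using Finset.induction_on with
  | empty => simp
  | @insert a s ha ih =>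
    have hva : ∀ i ∈ s, v i ≠ v a := fun i hi =>
      hv i (mem_insert_of_mem hi) a (mem_insert_self a s) (fun h => ha (h ▸ hi))
    have hvs : ∀ i ∈ s, ∀ j ∈ s, i ≠ j → v i ≠ v j := fun i hi j hj =>
      hv i (mem_insert_of_mem hi) j (mem_insert_of_mem hj)
    have hkey := key v s hvs (v a) hva
    have h0 := U0 v s hvs
    have h1' := U1 v s hvs
    have hexp : ∀ x ∈ s, v x ^ 2 * (∏ i ∈ (insert a s).erase x, (v x - 1 - v i)/(v x - v i))
        = ((v x ^ 2 * (∏ i ∈ s.erase x, (v x - 1 - v i)/(v x - v i))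
            - v x * (∏ i ∈ s.erase x, (v x - 1 - v i)/(v x - v i)))
            - v a * (∏ i ∈ s.erase x, (v x - 1 - v i)/(v x - v i)))
          - v a ^ 2 * ((∏ i ∈ s.erase x, (v x - 1 - v i)/(v x - v i))/(v x - v a)) := by
      intro x hx
      rw [Finset.erase_insert_of_ne (fun h => ha (by rw [h]; exact hx)),
        prod_insert (fun h => ha (Finset.mem_of_mem_erase h))]
      have h1 : v x - v a ≠ 0 := sub_ne_zero.2 (hva x hx)
      generalize (∏ i ∈ s.erase x, (v x - 1 - v i) / (v x - v i)) = P
      field_simp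
      ring
    rw [sum_insert ha, Finset.erase_insert ha, Finset.sum_congr rfl hexp,
      Finset.sum_sub_distrib, Finset.sum_sub_distrib, Finset.sum_sub_distrib,
      ih hvs, h1', ← Finset.mul_sum, h0, ← Finset.mul_sum]
    have e1 : ∑ x ∈ s, (∏ i ∈ s.erase x, (v x - 1 - v i) / (v x - v i)) / (v x - v a)
        = (∏ i ∈ s, (v a - 1 - v i) / (v a - v i)) - 1 := by rw [hkey]; ring
    rw [e1, sum_insert ha, sum_insert ha, card_insert_of_notMem ha]
    push_cast
    ring

private lemma algMain {ι : Type*} [DecidableEq ι] (v : ι → ℚ) (s : Finset ι)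
    (hv : ∀ i ∈ s, ∀ j ∈ s, i ≠ j → v i ≠ v j) :
    ∑ x ∈ s, (v x - (s.card : ℚ)) * v x * ∏ i ∈ s.erase x, (v x - 1 - v i) / (v x - v i)
      = (∑ i ∈ s, (v i)^2) - (2*(s.card : ℚ) - 1) * (∑ i ∈ s, v i)
        + (s.card : ℚ) * ((s.card : ℚ) - 1) * (2*(s.card : ℚ) - 1) / 3 := by
  have h1 := U1 v s hv
  have h2 := U2 v s hv
  have hpt : ∀ x ∈ s, (v x - (s.card : ℚ)) * v x * ∏ i ∈ s.erase x, (v x - 1 - v i) / (v x - v i)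
      = v x ^ 2 * (∏ i ∈ s.erase x, (v x - 1 - v i) / (v x - v i))
        - (s.card : ℚ) * (v x * ∏ i ∈ s.erase x, (v x - 1 - v i) / (v x - v i)) := by
    intro x _; ring
  rw [Finset.sum_congr rfl hpt, Finset.sum_sub_distrib, ← Finset.mul_sum, h1, h2]
  ring


private lemma hook_formula (Y : YoungDiagram) (x y : ℕ) :
    hookLen Y.cells (x, y) = (Y.rowLen x - y) + (Y.colLen y - (x + 1)) := by
  unfold hookLen
  have h1 : Y.cells.filter (fun v => v.1 = (x,y).1 ∧ (x,y).2 ≤ v.2)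
      = (Finset.Ico y (Y.rowLen x)).image (fun j => (x, j)) := by
    ext ⟨a, b⟩
    simp only [Finset.mem_filter, Finset.mem_image, Finset.mem_Ico, YoungDiagram.mem_cells,
      YoungDiagram.mem_iff_lt_rowLen, Prod.mk.injEq]
    constructor
    · rintro ⟨hb, rfl, hy⟩
      exact ⟨b, ⟨hy, hb⟩, rfl, rfl⟩
    · rintro ⟨j, ⟨hy, hb⟩, rfl, rfl⟩
      exact ⟨hb, rfl, hy⟩
  have h2 : Y.cells.filter (fun v => v.2 = (x,y).2 ∧ (x,y).1 < v.1)
      = (Finset.Ioo x (Y.colLen y)).image (fun i => (i, y)) := by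
    ext ⟨a, b⟩
    simp only [Finset.mem_filter, Finset.mem_image, Finset.mem_Ioo, YoungDiagram.mem_cells,
      YoungDiagram.mem_iff_lt_colLen, Prod.mk.injEq]
    constructor
    · rintro ⟨hb, rfl, hy⟩
      exact ⟨a, ⟨hy, hb⟩, rfl, rfl⟩
    · rintro ⟨j, ⟨hy, hb⟩, rfl, rfl⟩
      exact ⟨hb, rfl, hy⟩
  rw [h1, h2, Finset.card_image_of_injective _ (fun a b h => by simpa using h),
    Finset.card_image_of_injective _ (fun a b h => by simpa using h),
    Nat.card_Ico, Nat.card_Ioo]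
  omega

private lemma hook_pos (c : Finset (ℕ × ℕ)) (u : ℕ × ℕ) (hu : u ∈ c) : 0 < hookLen c u := by
  have : u ∈ c.filter (fun v => v.1 = u.1 ∧ u.2 ≤ v.2) :=
    Finset.mem_filter.2 ⟨hu, rfl, le_refl _⟩
  have := Finset.card_pos.2 ⟨u, this⟩
  unfold hookLen; omega

private def nrD (Y : YoungDiagram) : ℕ := Y.colLen 0
private def muD (Y : YoungDiagram) (i : ℕ) : ℕ := Y.rowLen i + (nrD Y - 1 - i)

private lemma rowLen_pos (Y : YoungDiagram) {i : ℕ} (hi : i < nrD Y) : 0 < Y.rowLen i := by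
  rw [← YoungDiagram.mem_iff_lt_rowLen]
  rw [show (nrD Y) = Y.colLen 0 from rfl, ← YoungDiagram.mem_iff_lt_colLen] at hi
  exact hi

private lemma lt_nr_of_rowLen_pos (Y : YoungDiagram) {i : ℕ} (hi : 0 < Y.rowLen i) :
    i < nrD Y := by
  rw [← YoungDiagram.mem_iff_lt_rowLen] at hi
  rw [show (nrD Y) = Y.colLen 0 from rfl, ← YoungDiagram.mem_iff_lt_colLen]
  exact hi

private lemma mu_anti (Y : YoungDiagram) {i j : ℕ} (hij : i ≤ j) (hj : j < nrD Y) :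
    muD Y j + (j - i) ≤ muD Y i := by
  have h1 : Y.rowLen j ≤ Y.rowLen i := Y.rowLen_anti i j hij
  unfold muD; omega

private lemma mu_pos (Y : YoungDiagram) {i : ℕ} (hi : i < nrD Y) : 1 ≤ muD Y i := by
  have := rowLen_pos Y hi; unfold muD; omega

private lemma colLen_corner (Y : YoungDiagram) {x : ℕ} (hx : Y.rowLen (x+1) < Y.rowLen x) :
    Y.colLen (Y.rowLen x - 1) = x + 1 := by
  have h1 : (x, Y.rowLen x - 1) ∈ Y := by
    rw [YoungDiagram.mem_iff_lt_rowLen]; omega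
  have h2 : (x+1, Y.rowLen x - 1) ∉ Y := by
    rw [YoungDiagram.mem_iff_lt_rowLen]; omega
  rw [YoungDiagram.mem_iff_lt_colLen] at h1 h2
  omega

private lemma mu_gap (Y : YoungDiagram) {x i : ℕ} (hx : Y.rowLen (x+1) < Y.rowLen x)
    (h1 : x < i) (h2 : i < nrD Y) : muD Y i + 2 ≤ muD Y x := by
  have h3 : muD Y i + (i - (x+1)) ≤ muD Y (x+1) := mu_anti Y (by omega) h2
  have h4 : x + 1 ≤ i := h1
  have h5 : x < nrD Y := by omega
  unfold muD at *
  omega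

private lemma Hanti (Y : YoungDiagram) {x j1 j2 : ℕ} (h12 : j1 ≤ j2) (h2 : j2 < Y.rowLen x) :
    hookLen Y.cells (x, j2) + (j2 - j1) ≤ hookLen Y.cells (x, j1) := by
  rw [hook_formula, hook_formula]
  have hc : Y.colLen j2 ≤ Y.colLen j1 := Y.colLen_anti j1 j2 h12
  have hx2 : (x, j2) ∈ Y := YoungDiagram.mem_iff_lt_rowLen.2 h2
  rw [YoungDiagram.mem_iff_lt_colLen] at hx2
  omega

private lemma Hcorner (Y : YoungDiagram) {x : ℕ} (hx : Y.rowLen (x+1) < Y.rowLen x) :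
    hookLen Y.cells (x, Y.rowLen x - 1) = 1 := by
  rw [hook_formula, colLen_corner Y hx]
  omega

private lemma Hzero (Y : YoungDiagram) {x : ℕ} (hx : x < nrD Y) :
    hookLen Y.cells (x, 0) = muD Y x := by
  rw [hook_formula]
  have : 0 < Y.rowLen x := rowLen_pos Y hx
  unfold muD nrD at *
  omega

private lemma Hdisj (Y : YoungDiagram) {x j i : ℕ} (hx : Y.rowLen (x+1) < Y.rowLen x)
    (hj : j < Y.rowLen x - 1) (hi1 : x < i) (hi2 : i < nrD Y) :
    hookLen Y.cells (x, j) ≠ muD Y x - muD Y i := by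
  rw [hook_formula]
  have hri : Y.rowLen i ≤ Y.rowLen x := Y.rowLen_anti x i (by omega)
  have hnr : x < nrD Y := by omega
  by_cases hY : (i, j) ∈ Y
  · have hc : i < Y.colLen j := YoungDiagram.mem_iff_lt_colLen.1 hY
    have hr : j < Y.rowLen i := YoungDiagram.mem_iff_lt_rowLen.1 hY
    unfold muD nrD at *
    omega
  · have hc : Y.colLen j ≤ i := by
      by_contra h
      exact hY (YoungDiagram.mem_iff_lt_colLen.2 (by omega))
    have hr : Y.rowLen i ≤ j := by
      by_contra h
      exact hY (YoungDiagram.mem_iff_lt_rowLen.2 (by omega))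
    unfold muD nrD at *
    omega

private lemma telescope (n : ℕ) (h : 1 ≤ n) :
    ∏ k ∈ Icc 2 n, ((k : ℚ)/((k : ℚ) - 1)) = n := by
  induction n with
  | zero => omega
  | succ n ih =>
    rcases Nat.lt_or_ge n 1 with h'|h'
    · interval_cases n
      norm_num
    · rw [Finset.prod_Icc_succ_top (by omega), ih h']
      have h1 : (n:ℚ) ≠ 0 := by positivity
      have h2 : ((n:ℚ) + 1) - 1 = (n:ℚ) := by ring
      push_cast
      rw [h2]
      field_simp

private lemma colHook (Y : YoungDiagram) {x i : ℕ} (hx : Y.rowLen (x+1) < Y.rowLen x)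
    (hi : i < x) :
    hookLen Y.cells (i, Y.rowLen x - 1) = (muD Y i - muD Y x) + 1 := by
  rw [hook_formula, colLen_corner Y hx]
  have h1 : Y.rowLen x ≤ Y.rowLen i := Y.rowLen_anti i x (by omega)
  have h2 : x < nrD Y := lt_nr_of_rowLen_pos Y (by omega)
  unfold muD at *
  omega

private lemma rowProd (Y : YoungDiagram) {x : ℕ} (hx : Y.rowLen (x+1) < Y.rowLen x) :
    (∏ j ∈ range (Y.rowLen x - 1),
        ((hookLen Y.cells (x,j) : ℚ)/((hookLen Y.cells (x,j) : ℚ) - 1)))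
    * (∏ i ∈ Ioo x (nrD Y),
        (((muD Y x - muD Y i : ℕ) : ℚ)/(((muD Y x - muD Y i : ℕ) : ℚ) - 1)))
    = muD Y x := by
  have hxnr : x < nrD Y := lt_nr_of_rowLen_pos Y (by omega)
  set f : ℕ → ℚ := fun k => (k:ℚ)/((k:ℚ) - 1) with hf
  set y := Y.rowLen x - 1 with hy
  -- bounds for row hooks
  have hHb : ∀ j < y, 2 ≤ hookLen Y.cells (x, j) ∧ hookLen Y.cells (x, j) ≤ muD Y x := by
    intro j hj
    have h1 := Hanti Y (show j ≤ y from by omega) (show y < Y.rowLen x from by omega)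
    have h2 := Hanti Y (show 0 ≤ j from by omega) (show j < Y.rowLen x from by omega)
    rw [Hcorner Y hx] at h1
    rw [Hzero Y hxnr] at h2
    omega
  have hBb : ∀ i, x < i → i < nrD Y → 2 ≤ muD Y x - muD Y i ∧ muD Y x - muD Y i ≤ muD Y x := by
    intro i h1 h2
    have := mu_gap Y hx h1 h2
    have := mu_pos Y h2
    omega
  have injA : ∀ j1 ∈ range y, ∀ j2 ∈ range y,
      hookLen Y.cells (x,j1) = hookLen Y.cells (x,j2) → j1 = j2 := by
    intro j1 h1 j2 h2 heq
    rw [mem_range] at h1 h2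
    by_contra hne
    rcases Nat.lt_or_ge j1 j2 with h | h
    · have := Hanti Y (le_of_lt h) (show j2 < Y.rowLen x from by omega); omega
    · have := Hanti Y (show j2 ≤ j1 from by omega) (show j1 < Y.rowLen x from by omega); omega
  have injB : ∀ i1 ∈ Ioo x (nrD Y), ∀ i2 ∈ Ioo x (nrD Y),
      muD Y x - muD Y i1 = muD Y x - muD Y i2 → i1 = i2 := by
    intro i1 h1 i2 h2 heq
    rw [mem_Ioo] at h1 h2
    have g1 := mu_gap Y hx h1.1 h1.2
    have g2 := mu_gap Y hx h2.1 h2.2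
    by_contra hne
    rcases Nat.lt_or_ge i1 i2 with h | h
    · have := mu_anti Y (le_of_lt h) h2.2; omega
    · have := mu_anti Y (show i2 ≤ i1 from by omega) h1.2; omega
  set A := (range y).image (fun j => hookLen Y.cells (x,j)) with hA
  set B := (Ioo x (nrD Y)).image (fun i => muD Y x - muD Y i) with hB
  have hdisj : Disjoint A B := by
    rw [Finset.disjoint_left]
    rintro a ha hb
    rw [hA, Finset.mem_image] at ha
    rw [hB, Finset.mem_image] at hb
    obtain ⟨j, hj, rfl⟩ := ha
    obtain ⟨i, hi, hieq⟩ := hb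
    rw [mem_range] at hj
    rw [mem_Ioo] at hi
    exact Hdisj Y hx hj hi.1 hi.2 hieq.symm
  have hsub : A ∪ B ⊆ Icc 2 (muD Y x) := by
    intro a ha
    rw [Finset.mem_union] at ha
    rw [Finset.mem_Icc]
    rcases ha with ha | ha
    · rw [hA, Finset.mem_image] at ha
      obtain ⟨j, hj, rfl⟩ := ha
      exact hHb j (mem_range.1 hj)
    · rw [hB, Finset.mem_image] at ha
      obtain ⟨i, hi, rfl⟩ := ha
      rw [mem_Ioo] at hi
      exact hBb i hi.1 hi.2
  have hcardA : A.card = y := by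
    rw [hA, Finset.card_image_of_injOn (fun a ha b hb h => injA a ha b hb h), card_range]
  have hcardB : B.card = nrD Y - x - 1 := by
    rw [hB, Finset.card_image_of_injOn (fun a ha b hb h => injB a ha b hb h), Nat.card_Ioo]
  have hun : A ∪ B = Icc 2 (muD Y x) := by
    apply Finset.eq_of_subset_of_card_le hsub
    rw [Finset.card_union_of_disjoint hdisj, hcardA, hcardB, Nat.card_Icc]
    unfold muD
    omega
  have e1 : ∏ j ∈ range y, f (hookLen Y.cells (x,j)) = ∏ a ∈ A, f a :=
    (Finset.prod_image injA).symm
  have e2 : ∏ i ∈ Ioo x (nrD Y), f (muD Y x - muD Y i) = ∏ a ∈ B, f a :=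
    (Finset.prod_image injB).symm
  calc (∏ j ∈ range y, f (hookLen Y.cells (x,j)))
        * (∏ i ∈ Ioo x (nrD Y), f (muD Y x - muD Y i))
      = (∏ a ∈ A, f a) * (∏ a ∈ B, f a) := by rw [e1, e2]
    _ = ∏ a ∈ A ∪ B, f a := (Finset.prod_union hdisj).symm
    _ = ∏ a ∈ Icc 2 (muD Y x), f a := by rw [hun]
    _ = muD Y x := telescope _ (mu_pos Y hxnr)

private lemma eraseHook (Y : YoungDiagram) {x : ℕ} (hx : Y.rowLen (x+1) < Y.rowLen x)
    (v : ℕ × ℕ) (hv : v ∈ Y.cells)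
    (hP : (v.1 = x ∧ v.2 < Y.rowLen x - 1) ∨ (v.2 = Y.rowLen x - 1 ∧ v.1 < x)) :
    hookLen (Y.cells.erase (x, Y.rowLen x - 1)) v + 1 = hookLen Y.cells v := by
  set y := Y.rowLen x - 1 with hy
  unfold hookLen
  rw [Finset.filter_erase, Finset.filter_erase]
  rcases hP with ⟨h1, h2⟩ | ⟨h1, h2⟩
  · have hin : (x, y) ∈ Y.cells.filter (fun w => w.1 = v.1 ∧ v.2 ≤ w.2) := by
      refine Finset.mem_filter.2 ⟨?_, h1.symm, by omega⟩
      rw [YoungDiagram.mem_cells, YoungDiagram.mem_iff_lt_rowLen]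
      omega
    have hout : (x, y) ∉ Y.cells.filter (fun w => w.2 = v.2 ∧ v.1 < w.1) := by
      rw [Finset.mem_filter]
      rintro ⟨-, h3, -⟩
      omega
    rw [Finset.card_erase_of_mem hin, Finset.erase_eq_of_notMem hout]
    have : 0 < (Y.cells.filter (fun w => w.1 = v.1 ∧ v.2 ≤ w.2)).card :=
      Finset.card_pos.2 ⟨(x,y), hin⟩
    omega
  · have hin : (x, y) ∈ Y.cells.filter (fun w => w.2 = v.2 ∧ v.1 < w.1) := by
      refine Finset.mem_filter.2 ⟨?_, h1.symm, by omega⟩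
      rw [YoungDiagram.mem_cells, YoungDiagram.mem_iff_lt_rowLen]
      omega
    have hout : (x, y) ∉ Y.cells.filter (fun w => w.1 = v.1 ∧ v.2 ≤ w.2) := by
      rw [Finset.mem_filter]
      rintro ⟨-, h3, h4⟩
      have hvy : v.2 < Y.rowLen v.1 := by
        have := YoungDiagram.mem_iff_lt_rowLen.1 (YoungDiagram.mem_cells v |>.1 hv)
        exact this
      have : Y.rowLen v.1 ≤ Y.rowLen x := by
        rcases le_or_gt v.1 x with h | h
        · omega
        · exact le_trans (Y.rowLen_anti (x+1) v.1 h) (by omega)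
      omega
    rw [Finset.card_erase_of_mem hin, Finset.erase_eq_of_notMem hout]
    have : 0 < (Y.cells.filter (fun w => w.2 = v.2 ∧ v.1 < w.1)).card :=
      Finset.card_pos.2 ⟨(x,y), hin⟩
    omega

private lemma sameHook (Y : YoungDiagram) {x : ℕ} (hx : Y.rowLen (x+1) < Y.rowLen x)
    (v : ℕ × ℕ) (hv : v ∈ Y.cells.erase (x, Y.rowLen x - 1))
    (hP : ¬((v.1 = x ∧ v.2 < Y.rowLen x - 1) ∨ (v.2 = Y.rowLen x - 1 ∧ v.1 < x))) :
    hookLen (Y.cells.erase (x, Y.rowLen x - 1)) v = hookLen Y.cells v := by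
  set y := Y.rowLen x - 1 with hy
  push_neg at hP
  obtain ⟨hP1, hP2⟩ := hP
  rw [Finset.mem_erase] at hv
  unfold hookLen
  rw [Finset.filter_erase, Finset.filter_erase]
  have hout1 : (x, y) ∉ Y.cells.filter (fun w => w.1 = v.1 ∧ v.2 ≤ w.2) := by
    rw [Finset.mem_filter]
    rintro ⟨-, h3, h4⟩
    -- v.1 = x, v.2 ≤ y
    have hvy : v.2 < Y.rowLen v.1 :=
      YoungDiagram.mem_iff_lt_rowLen.1 (YoungDiagram.mem_cells v |>.1 hv.2)
    have hv2 : v.2 = y := by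
      have := hP1 h3.symm
      omega
    exact hv.1 (by rw [Prod.ext_iff]; exact ⟨h3.symm, hv2⟩)
  have hout2 : (x, y) ∉ Y.cells.filter (fun w => w.2 = v.2 ∧ v.1 < w.1) := by
    rw [Finset.mem_filter]
    rintro ⟨-, h3, h4⟩
    have := hP2 h3.symm
    omega
  rw [Finset.erase_eq_of_notMem hout1, Finset.erase_eq_of_notMem hout2]

private lemma range_erase_split {x n : ℕ} (hx : x < n) :
    (range n).erase x = range x ∪ Ioo x n := by
  ext a
  simp only [Finset.mem_erase, Finset.mem_range, Finset.mem_union, Finset.mem_Ioo, ne_eq]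
  omega

private lemma ratio (Y : YoungDiagram) {x : ℕ} (hx : Y.rowLen (x+1) < Y.rowLen x) :
    (hookProd Y.cells : ℚ) = (hookProd (Y.cells.erase (x, Y.rowLen x - 1)) : ℚ)
      * ((muD Y x : ℚ) * ∏ i ∈ (range (nrD Y)).erase x,
          (((muD Y x : ℚ) - 1 - (muD Y i : ℚ))/((muD Y x : ℚ) - (muD Y i : ℚ)))) := by
  set y := Y.rowLen x - 1 with hy
  set u : ℕ × ℕ := (x, y) with hudef
  have hxnr : x < nrD Y := lt_nr_of_rowLen_pos Y (by omega)
  have hu : u ∈ Y.cells := by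
    rw [YoungDiagram.mem_cells, YoungDiagram.mem_iff_lt_rowLen]
    omega
  set P : ℕ × ℕ → Prop := fun v => (v.1 = x ∧ v.2 < y) ∨ (v.2 = y ∧ v.1 < x) with hP
  have hPdec : DecidablePred P := fun v => by unfold P; infer_instance
  -- step A
  have stepA : (hookProd Y.cells : ℚ) = ∏ v ∈ Y.cells.erase u, (hookLen Y.cells v : ℚ) := by
    unfold hookProd
    rw [← Finset.mul_prod_erase _ _ hu]
    have h1 : hookLen Y.cells u = 1 := Hcorner Y hx
    rw [h1]
    push_cast
    ring
  have stepB : (hookProd (Y.cells.erase u) : ℚ)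
      = ∏ v ∈ Y.cells.erase u, (hookLen (Y.cells.erase u) v : ℚ) := by
    unfold hookProd; push_cast; rfl
  -- split by P
  rw [stepA, stepB, ← Finset.prod_filter_mul_prod_filter_not (Y.cells.erase u) P,
    ← Finset.prod_filter_mul_prod_filter_not (Y.cells.erase u) P
      (fun v => (hookLen (Y.cells.erase u) v : ℚ))]
  have stepD : ∏ v ∈ (Y.cells.erase u).filter (fun v => ¬ P v),
      (hookLen (Y.cells.erase u) v : ℚ)
      = ∏ v ∈ (Y.cells.erase u).filter (fun v => ¬ P v), (hookLen Y.cells v : ℚ) := by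
    refine Finset.prod_congr rfl (fun v hv => ?_)
    rw [Finset.mem_filter] at hv
    rw [sameHook Y hx v hv.1 hv.2]
  have stepE : ∏ v ∈ (Y.cells.erase u).filter P, (hookLen (Y.cells.erase u) v : ℚ)
      = ∏ v ∈ (Y.cells.erase u).filter P, ((hookLen Y.cells v : ℚ) - 1) := by
    refine Finset.prod_congr rfl (fun v hv => ?_)
    rw [Finset.mem_filter, Finset.mem_erase] at hv
    have := eraseHook Y hx v hv.1.2 hv.2
    push_cast [← this]
    ring
  rw [stepD, stepE]
  -- now reduce to the filtered-P identity
  have hge2 : ∀ v ∈ (Y.cells.erase u).filter P, 2 ≤ hookLen Y.cells v := by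
    intro v hv
    rw [Finset.mem_filter, Finset.mem_erase] at hv
    rcases hv.2 with ⟨h1, h2⟩ | ⟨h1, h2⟩
    · obtain ⟨a, b⟩ := v
      simp only at h1 h2
      have hb := Hanti Y (show b ≤ y from by omega) (show y < Y.rowLen x from by omega)
      rw [Hcorner Y hx] at hb
      rw [h1]
      omega
    · obtain ⟨a, b⟩ := v
      simp only at h1 h2
      rw [h1, colHook Y hx h2]
      have := mu_anti Y (show a ≤ x from by omega) hxnr
      omega
  have key1 : ∏ v ∈ (Y.cells.erase u).filter P, (hookLen Y.cells v : ℚ)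
      = (∏ v ∈ (Y.cells.erase u).filter P,
          ((hookLen Y.cells v : ℚ)/((hookLen Y.cells v : ℚ) - 1)))
        * ∏ v ∈ (Y.cells.erase u).filter P, ((hookLen Y.cells v : ℚ) - 1) := by
    rw [← Finset.prod_mul_distrib]
    refine Finset.prod_congr rfl (fun v hv => ?_)
    have h2 := hge2 v hv
    have hne : (hookLen Y.cells v : ℚ) - 1 ≠ 0 := by
      have : (2:ℚ) ≤ (hookLen Y.cells v : ℚ) := by exact_mod_cast h2
      intro h; rw [sub_eq_zero] at h; rw [h] at this; norm_num at this
    field_simp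
  rw [key1]
  have main : ∏ v ∈ (Y.cells.erase u).filter P,
      ((hookLen Y.cells v : ℚ)/((hookLen Y.cells v : ℚ) - 1))
      = (muD Y x : ℚ) * ∏ i ∈ (range (nrD Y)).erase x,
          (((muD Y x : ℚ) - 1 - (muD Y i : ℚ))/((muD Y x : ℚ) - (muD Y i : ℚ))) := by
    have hSplit : (Y.cells.erase u).filter P
        = ((range y).image fun j => (x, j)) ∪ ((range x).image fun i => (i, y)) := by
      ext ⟨a, b⟩
      simp only [Finset.mem_filter, Finset.mem_erase, Finset.mem_union, Finset.mem_image,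
        Finset.mem_range, YoungDiagram.mem_cells, Prod.mk.injEq, ne_eq]
      constructor
      · rintro ⟨⟨hne, hmem⟩, hPv⟩
        rcases hPv with ⟨h1, h2⟩ | ⟨h1, h2⟩
        · exact Or.inl ⟨b, h2, h1.symm, rfl⟩
        · exact Or.inr ⟨a, h2, rfl, h1.symm⟩
      · rintro (⟨j, hj, rfl, rfl⟩ | ⟨i, hi, rfl, rfl⟩)
        · refine ⟨⟨?_, ?_⟩, Or.inl ⟨rfl, hj⟩⟩
          · intro h
            rw [hudef, Prod.mk.injEq] at h
            omega
          · rw [YoungDiagram.mem_iff_lt_rowLen]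
            omega
        · refine ⟨⟨?_, ?_⟩, Or.inr ⟨rfl, hi⟩⟩
          · intro h
            rw [hudef, Prod.mk.injEq] at h
            omega
          · rw [YoungDiagram.mem_iff_lt_colLen, colLen_corner Y hx]
            omega
    have hdisjRC : Disjoint ((range y).image fun j => (x, j))
        ((range x).image fun i => (i, y)) := by
      rw [Finset.disjoint_left]
      rintro ⟨a, b⟩ ha hb
      simp only [Finset.mem_image, Finset.mem_range, Prod.mk.injEq] at ha hb
      obtain ⟨j, hj, rfl, rfl⟩ := ha
      obtain ⟨i, hi, rfl, h2⟩ := hb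
      omega
    rw [hSplit, Finset.prod_union hdisjRC,
      Finset.prod_image (fun a _ b _ h => by simpa using h),
      Finset.prod_image (fun a _ b _ h => by simpa using h)]
    -- column part pointwise
    have hcolpt : ∀ i ∈ range x,
        ((hookLen Y.cells (i, y) : ℚ)/((hookLen Y.cells (i, y) : ℚ) - 1))
        = ((muD Y x : ℚ) - 1 - (muD Y i : ℚ))/((muD Y x : ℚ) - (muD Y i : ℚ)) := by
      intro i hi
      rw [mem_range] at hi
      have hmu : muD Y x + 1 ≤ muD Y i := by
        have := mu_anti Y (le_of_lt hi) hxnr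
        omega
      rw [colHook Y hx hi]
      have hc : (((muD Y i - muD Y x) + 1 : ℕ) : ℚ) = ((muD Y i : ℚ) - (muD Y x : ℚ)) + 1 := by
        push_cast [Nat.cast_sub (show muD Y x ≤ muD Y i by omega)]
        ring
      rw [hc]
      have hA : (1:ℚ) ≤ (muD Y i : ℚ) - (muD Y x : ℚ) := by
        have : ((muD Y x : ℕ) : ℚ) + 1 ≤ ((muD Y i : ℕ) : ℚ) := by exact_mod_cast hmu
        linarith
      rw [div_eq_div_iff (by linarith) (by intro h; rw [sub_eq_zero] at h; rw [h] at hA; linarith)]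
      ring
    rw [Finset.prod_congr rfl hcolpt]
    -- row part
    have hrowP := rowProd Y hx
    have hIoopt : ∀ i ∈ Ioo x (nrD Y),
        (((muD Y x - muD Y i : ℕ) : ℚ)/(((muD Y x - muD Y i : ℕ) : ℚ) - 1))
        = (((muD Y x : ℚ) - 1 - (muD Y i : ℚ))/((muD Y x : ℚ) - (muD Y i : ℚ)))⁻¹ := by
      intro i hi
      rw [mem_Ioo] at hi
      have hgap := mu_gap Y hx hi.1 hi.2
      have hc : ((muD Y x - muD Y i : ℕ) : ℚ) = (muD Y x : ℚ) - (muD Y i : ℚ) :=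
        Nat.cast_sub (by omega)
      rw [hc, inv_div]
      congr 1
      ring
    rw [Finset.prod_congr rfl hIoopt, Finset.prod_inv_distrib] at hrowP
    have hprodIoo : (∏ i ∈ Ioo x (nrD Y),
        (((muD Y x : ℚ) - 1 - (muD Y i : ℚ))/((muD Y x : ℚ) - (muD Y i : ℚ)))) ≠ 0 := by
      apply Finset.prod_ne_zero_iff.2
      intro i hi
      rw [mem_Ioo] at hi
      have hgap := mu_gap Y hx hi.1 hi.2
      have h1 : ((muD Y i : ℕ) : ℚ) + 2 ≤ ((muD Y x : ℕ) : ℚ) := by exact_mod_cast hgap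
      apply div_ne_zero
      · intro h; rw [sub_eq_zero] at h; nlinarith [h]
      · intro h; rw [sub_eq_zero] at h; nlinarith [h]
    rw [range_erase_split hxnr, Finset.prod_union (by
      rw [Finset.disjoint_left]
      intro a ha hb
      rw [mem_range] at ha
      rw [mem_Ioo] at hb
      omega)]
    have hrow2 : ∏ j ∈ range y,
        ((hookLen Y.cells (x, j) : ℚ)/((hookLen Y.cells (x, j) : ℚ) - 1))
        = (muD Y x : ℚ) * ∏ i ∈ Ioo x (nrD Y),
            (((muD Y x : ℚ) - 1 - (muD Y i : ℚ))/((muD Y x : ℚ) - (muD Y i : ℚ))) := by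
      rw [← div_eq_mul_inv, div_eq_iff hprodIoo] at hrowP
      rw [← hy] at hrowP
      exact hrowP
    rw [hrow2]
    ring
  rw [main]
  ring

private lemma sum_range_cast (n : ℕ) : ∑ j ∈ range n, (j:ℚ) = (n:ℚ)*((n:ℚ)-1)/2 := by
  induction n with
  | zero => simp
  | succ n ih => rw [Finset.sum_range_succ, ih]; push_cast; ring

private lemma sum_range_sq_cast (n : ℕ) :
    ∑ j ∈ range n, (j:ℚ)^2 = (n:ℚ)*((n:ℚ)-1)*(2*(n:ℚ)-1)/6 := by
  induction n with
  | zero => simp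
  | succ n ih => rw [Finset.sum_range_succ, ih]; push_cast; ring

private lemma cellsSum (Y : YoungDiagram) (F : ℕ × ℕ → ℚ) :
    ∑ u ∈ Y.cells, F u = ∑ i ∈ range (nrD Y), ∑ j ∈ range (Y.rowLen i), F (i, j) := by
  have hdec : Y.cells = (range (nrD Y)).biUnion
      (fun i => (range (Y.rowLen i)).image (fun j => (i, j))) := by
    ext ⟨a, b⟩
    simp only [Finset.mem_biUnion, Finset.mem_range, Finset.mem_image, YoungDiagram.mem_cells,
      Prod.mk.injEq]
    constructor
    · intro hab
      have h1 : b < Y.rowLen a := YoungDiagram.mem_iff_lt_rowLen.1 hab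
      have h2 : (a, 0) ∈ Y := Y.up_left_mem (le_refl a) (Nat.zero_le b) hab
      have h3 : a < nrD Y := YoungDiagram.mem_iff_lt_colLen.1 h2
      exact ⟨a, h3, b, h1, rfl, rfl⟩
    · rintro ⟨i, hi, j, hj, rfl, rfl⟩
      exact YoungDiagram.mem_iff_lt_rowLen.2 hj
  rw [hdec, Finset.sum_biUnion]
  · refine Finset.sum_congr rfl (fun i _ => ?_)
    rw [Finset.sum_image (fun a _ b _ h => by simpa using h)]
  · intro i _ j _ hij
    simp only [Finset.disjoint_left, Finset.mem_image, Finset.mem_range]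
    rintro ⟨a, b⟩ ⟨j1, hj1, h1⟩ ⟨j2, hj2, h2⟩
    rw [Prod.mk.injEq] at h1 h2
    exact (hij (h1.1.trans h2.1.symm)).elim

private lemma contentSum (Y : YoungDiagram) :
    2 * (∑ u ∈ Y.cells, ((u.2 : ℚ) - (u.1 : ℚ)))
    = (∑ i ∈ range (nrD Y), ((muD Y i : ℚ))^2)
      - (2*(nrD Y : ℚ) - 1) * (∑ i ∈ range (nrD Y), (muD Y i : ℚ))
      + (nrD Y : ℚ) * ((nrD Y : ℚ) - 1) * (2*(nrD Y : ℚ) - 1) / 3 := by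
  rw [cellsSum Y (fun u => ((u.2 : ℚ) - (u.1 : ℚ)))]
  have h1 : ∀ i ∈ range (nrD Y),
      (2:ℚ) * ∑ j ∈ range (Y.rowLen i), ((j:ℚ) - (i:ℚ))
      = (((muD Y i : ℚ))^2 - (2*(nrD Y : ℚ) - 1) * (muD Y i : ℚ))
        - (((nrD Y - 1 - i : ℕ) : ℚ)^2 - (2*(nrD Y : ℚ) - 1) * ((nrD Y - 1 - i : ℕ) : ℚ)) := by
    intro i hi
    rw [mem_range] at hi
    rw [Finset.sum_sub_distrib, sum_range_cast, Finset.sum_const, card_range, nsmul_eq_mul]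
    have hmu : (muD Y i : ℚ) = (Y.rowLen i : ℚ) + ((nrD Y - 1 - i : ℕ) : ℚ) := by
      unfold muD; push_cast; ring
    have hkn : (nrD Y - 1 - i : ℕ) + (1 + i) = nrD Y := by omega
    have hk : ((nrD Y - 1 - i : ℕ) : ℚ) = (nrD Y : ℚ) - 1 - (i : ℚ) := by
      have := congrArg (fun m : ℕ => (m : ℚ)) hkn
      push_cast at this
      linarith
    rw [hmu, hk]
    ring
  simp only
  rw [Finset.mul_sum, Finset.sum_congr rfl h1, Finset.sum_sub_distrib, Finset.sum_sub_distrib,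
    ← Finset.mul_sum]
  have hrefl := Finset.sum_range_reflect
    (fun k => ((k:ℚ)^2 - (2*(nrD Y : ℚ) - 1) * (k:ℚ))) (nrD Y)
  rw [hrefl, Finset.sum_sub_distrib, sum_range_sq_cast, ← Finset.mul_sum, sum_range_cast]
  ring

/-- For a Young diagram `Y`, twice the sum of contents divided by `H_Y` equals the
sum over corners `(x,y)` of `(y - x)/H_{Y - (x,y)}` (content of box `(x,y)` is `y - x`). -/
theorem two_content_sum_div_hookProd_eq_sum_corners (Y : YoungDiagram) :
    2 * (∑ u ∈ Y.cells, ((u.2 : ℚ) - (u.1 : ℚ))) / hookProd Y.cells =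
    ∑ u ∈ Y.cells.filter fun u => (u.1 + 1, u.2) ∉ Y.cells ∧ (u.1, u.2 + 1) ∉ Y.cells,
      ((u.2 : ℚ) - (u.1 : ℚ)) / hookProd (Y.cells.erase u) := by
  classical
  have hhp : ∀ c : Finset (ℕ × ℕ), (hookProd c : ℚ) ≠ 0 := by
    intro c
    rw [Nat.cast_ne_zero]
    exact Finset.prod_ne_zero_iff.2 (fun u hu => (hook_pos c u hu).ne')
  have hHne := hhp Y.cells
  -- corner set characterization
  have hcorners : (Y.cells.filter fun u => (u.1 + 1, u.2) ∉ Y.cells ∧ (u.1, u.2 + 1) ∉ Y.cells)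
      = ((range (nrD Y)).filter (fun x => Y.rowLen (x+1) < Y.rowLen x)).image
          (fun x => (x, Y.rowLen x - 1)) := by
    ext ⟨a, b⟩
    simp only [Finset.mem_filter, Finset.mem_image, Finset.mem_range, YoungDiagram.mem_cells,
      Prod.mk.injEq]
    constructor
    · rintro ⟨hmem, h1, h2⟩
      have hb : b < Y.rowLen a := YoungDiagram.mem_iff_lt_rowLen.1 hmem
      have hb2 : ¬ (b + 1 < Y.rowLen a) := fun h => h2 (YoungDiagram.mem_iff_lt_rowLen.2 h)
      have ha1 : ¬ (b < Y.rowLen (a+1)) := fun h => h1 (YoungDiagram.mem_iff_lt_rowLen.2 h)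
      have ha : a < nrD Y := lt_nr_of_rowLen_pos Y (by omega)
      exact ⟨a, ⟨ha, by omega⟩, rfl, by omega⟩
    · rintro ⟨x, ⟨hx1, hx2⟩, rfl, rfl⟩
      refine ⟨YoungDiagram.mem_iff_lt_rowLen.2 (by omega), ?_, ?_⟩
      · intro h; have := YoungDiagram.mem_iff_lt_rowLen.1 h; omega
      · intro h; have := YoungDiagram.mem_iff_lt_rowLen.1 h; omega
  rw [hcorners, Finset.sum_image (fun a _ b _ h => by
    rw [Prod.mk.injEq] at h; exact h.1)]
  have hterm : ∀ x ∈ (range (nrD Y)).filter (fun x => Y.rowLen (x+1) < Y.rowLen x),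
      ((((x, Y.rowLen x - 1) : ℕ × ℕ).2 : ℚ) - (((x, Y.rowLen x - 1) : ℕ × ℕ).1 : ℚ))
          / (hookProd (Y.cells.erase (x, Y.rowLen x - 1)) : ℚ)
      = (((muD Y x : ℚ) - (nrD Y : ℚ)) * (muD Y x : ℚ) *
          ∏ i ∈ (range (nrD Y)).erase x,
            (((muD Y x : ℚ) - 1 - (muD Y i : ℚ))/((muD Y x : ℚ) - (muD Y i : ℚ))))
          / (hookProd Y.cells : ℚ) := by
    intro x hx
    rw [Finset.mem_filter, Finset.mem_range] at hx
    obtain ⟨hx1, hx2⟩ := hx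
    have hrat := ratio Y hx2
    have hH'ne := hhp (Y.cells.erase (x, Y.rowLen x - 1))
    have hrow1 : 0 < Y.rowLen x := rowLen_pos Y hx1
    have hcont : (((x, Y.rowLen x - 1) : ℕ × ℕ).2 : ℚ) - (((x, Y.rowLen x - 1) : ℕ × ℕ).1 : ℚ)
        = (muD Y x : ℚ) - (nrD Y : ℚ) := by
      simp only
      have e1 : ((Y.rowLen x - 1 : ℕ) : ℚ) = (Y.rowLen x : ℚ) - 1 := by
        rw [Nat.cast_sub (by omega)]; norm_num
      have e2 : (muD Y x : ℚ) = (Y.rowLen x : ℚ) + ((nrD Y - 1 - x : ℕ) : ℚ) := by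
        unfold muD; push_cast; ring
      have e3 : ((nrD Y - 1 - x : ℕ) : ℚ) = (nrD Y : ℚ) - 1 - (x : ℚ) := by
        have h : (nrD Y - 1 - x : ℕ) + (1 + x) = nrD Y := by omega
        have := congrArg (fun m : ℕ => (m : ℚ)) h
        push_cast at this
        linarith
      rw [e1, e2, e3]
      ring
    rw [hcont, div_eq_div_iff hH'ne hHne, hrat]
    ring
  rw [Finset.sum_congr rfl hterm, ← Finset.sum_div]
  have hnum : 2 * (∑ u ∈ Y.cells, ((u.2 : ℚ) - (u.1 : ℚ)))
      = ∑ x ∈ (range (nrD Y)).filter (fun x => Y.rowLen (x+1) < Y.rowLen x),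
          (((muD Y x : ℚ) - (nrD Y : ℚ)) * (muD Y x : ℚ) *
            ∏ i ∈ (range (nrD Y)).erase x,
              (((muD Y x : ℚ) - 1 - (muD Y i : ℚ))/((muD Y x : ℚ) - (muD Y i : ℚ)))) := by
    have hext : ∑ x ∈ (range (nrD Y)).filter (fun x => Y.rowLen (x+1) < Y.rowLen x),
          (((muD Y x : ℚ) - (nrD Y : ℚ)) * (muD Y x : ℚ) *
            ∏ i ∈ (range (nrD Y)).erase x,
              (((muD Y x : ℚ) - 1 - (muD Y i : ℚ))/((muD Y x : ℚ) - (muD Y i : ℚ))))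
        = ∑ x ∈ range (nrD Y),
          (((muD Y x : ℚ) - (nrD Y : ℚ)) * (muD Y x : ℚ) *
            ∏ i ∈ (range (nrD Y)).erase x,
              (((muD Y x : ℚ) - 1 - (muD Y i : ℚ))/((muD Y x : ℚ) - (muD Y i : ℚ)))) := by
      apply Finset.sum_subset (Finset.filter_subset _ _)
      intro x hxr hxf
      rw [Finset.mem_filter] at hxf
      rw [Finset.mem_range] at hxr
      have hnot : ¬ (Y.rowLen (x+1) < Y.rowLen x) := fun h => hxf ⟨Finset.mem_range.2 hxr, h⟩
      have heq : Y.rowLen (x+1) = Y.rowLen x := by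
        have := Y.rowLen_anti x (x+1) (by omega)
        omega
      have hpos : 0 < Y.rowLen x := rowLen_pos Y hxr
      have hx1n : x + 1 < nrD Y := lt_nr_of_rowLen_pos Y (by omega)
      have hmem : x + 1 ∈ (range (nrD Y)).erase x :=
        Finset.mem_erase.2 ⟨by omega, Finset.mem_range.2 hx1n⟩
      have hzn : muD Y (x+1) + 1 = muD Y x := by
        unfold muD; omega
      have hzero : ((muD Y x : ℚ) - 1 - (muD Y (x+1) : ℚ))/((muD Y x : ℚ) - (muD Y (x+1) : ℚ)) = 0 := by
        have : (muD Y (x+1) : ℚ) + 1 = (muD Y x : ℚ) := by exact_mod_cast hzn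
        rw [div_eq_zero_iff]
        left
        linarith
      rw [Finset.prod_eq_zero hmem hzero, mul_zero]
    rw [hext]
    have hdist : ∀ i ∈ range (nrD Y), ∀ j ∈ range (nrD Y), i ≠ j →
        (muD Y i : ℚ) ≠ (muD Y j : ℚ) := by
      have hlt : ∀ i j, i < j → j < nrD Y → muD Y j < muD Y i := by
        intro i j hij hj
        have := mu_anti Y (le_of_lt hij) hj
        omega
      intro i hi j hj hij
      rw [Finset.mem_range] at hi hj
      rcases Nat.lt_or_ge i j with h | h
      · have := hlt i j h hj
        intro hc
        exact absurd (Nat.cast_injective hc) (by omega)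
      · have := hlt j i (by omega) hi
        intro hc
        exact absurd (Nat.cast_injective hc) (by omega)
    have halg := algMain (fun i => (muD Y i : ℚ)) (range (nrD Y)) hdist
    rw [Finset.card_range] at halg
    rw [halg, contentSum Y]
  rw [hnum]
end

section
/- For any matching π of size n and any p with 1 ≤ p ≤ n - 1, the multiplicities defined by Rule A and Rule B coincide: m_p^{(A)}(π) = m_p^{(B)}(π). -/
/-- A noncrossing perfect matching of `{1,…,2n}`, given as a finset of pairs `(a,b)`
with `a < b`. -/
def IsMatching (n : ℕ) (M : Finset (ℕ × ℕ)) : Prop :=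
  (∀ q ∈ M, 1 ≤ q.1 ∧ q.1 < q.2 ∧ q.2 ≤ 2 * n) ∧
  (∀ x, 1 ≤ x → x ≤ 2 * n → ∃! q, q ∈ M ∧ (q.1 = x ∨ q.2 = x)) ∧
  (∀ q ∈ M, ∀ r ∈ M, ¬(q.1 < r.1 ∧ r.1 < q.2 ∧ q.2 < r.2))

/-- Rule A multiplicity: half the number of arches separating `{1,…,p} ∪ {2n+1-p,…,2n}`
from the middle part. -/
def mA (n : ℕ) (M : Finset (ℕ × ℕ)) (p : ℕ) : ℕ :=
  ((M.filter fun q => q.1 ≤ p ∧ p < q.2 ∧ q.2 < 2 * n + 1 - p).card +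
   (M.filter fun q => p < q.1 ∧ q.1 < 2 * n + 1 - p ∧ 2 * n + 1 - p ≤ q.2).card) / 2

/-- The Young diagram `Y(π)` of the matching `M`, with 1-indexed boxes `(x,y)`:
`(x,y) ∈ Y(π)` iff the number of left endpoints of arches among `{1,…,n-x+y}` is at
most `n - x`. -/
def cellsM (n : ℕ) (M : Finset (ℕ × ℕ)) : Finset (ℕ × ℕ) :=
  ((Finset.Icc 1 n) ×ˢ (Finset.Icc 1 n)).filter fun u =>
    ((M.image Prod.fst).filter fun t => t ≤ n - u.1 + u.2).card ≤ n - u.1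

/-- The diagonal depth of a box: the number of `t` with `(x+t, y+t)` a box of `Y(π)`.
The successive rims of `Y(π)` are the sets of boxes of fixed depth. -/
def depthM (n : ℕ) (M : Finset (ℕ × ℕ)) (u : ℕ × ℕ) : ℕ :=
  ((Finset.range (n + 1)).filter fun t => (u.1 + t, u.2 + t) ∈ cellsM n M).card

/-- The `ℓ`-th rim of `Y(π)`. -/
def rimM (n : ℕ) (M : Finset (ℕ × ℕ)) (ℓ : ℕ) : Finset (ℕ × ℕ) :=
  (cellsM n M).filter fun u => depthM n M u = ℓ

/-- Label (`n+1-x-y`) of the bottom-left box of the `ℓ`-th rim. -/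
def iLab (n : ℕ) (M : Finset (ℕ × ℕ)) (ℓ : ℕ) : ℕ :=
  ((rimM n M ℓ).filter fun u => u.1 = (rimM n M ℓ).sup Prod.fst).sup
    fun u => n + 1 - u.1 - u.2

/-- Label (`n+1-x-y`) of the top-right box of the `ℓ`-th rim. -/
def jLab (n : ℕ) (M : Finset (ℕ × ℕ)) (ℓ : ℕ) : ℕ :=
  ((rimM n M ℓ).filter fun u => u.2 = (rimM n M ℓ).sup Prod.snd).sup
    fun u => n + 1 - u.1 - u.2

/-- Minimal label on the `ℓ`-th rim (equals `n + 1` by convention on an empty rim,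
which then contributes nothing below). -/
def kLab (n : ℕ) (M : Finset (ℕ × ℕ)) (ℓ : ℕ) : ℕ :=
  n + 1 - (rimM n M ℓ).sup fun u => u.1 + u.2

/-- Rule B multiplicity: multiplicity of `p` in the union over the rims of the
multisets `{k} ∪ {i,…,k+1} ∪ {j,…,k+1}`. -/
def mB (n : ℕ) (M : Finset (ℕ × ℕ)) (p : ℕ) : ℕ :=
  ∑ ℓ ∈ Finset.Icc 1 n,
    ((if kLab n M ℓ ≤ p ∧ p ≤ iLab n M ℓ then 1 else 0) +
     (if kLab n M ℓ + 1 ≤ p ∧ p ≤ jLab n M ℓ then 1 else 0))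

/-!
View `M` as a Dyck path: after `m` steps it has opened `openCount M m` arches and closed
`closeCount M m`, and its height `crossCount M m` is the number of arches over the gap after `m`.
The box of the `ℓ`-th rim on the diagonal `n - x + y = m` exists iff `ℓ ≤ closeCount M m` and
`openCount M m + ℓ ≤ n`, and its label is `crossCount M m + 2ℓ - 1`. The path moves by `±1`,
and by noncrossing its minimum over `[p, 2n - p]` is the number `s` of arches spanning that
interval. Hence `p` lies in the `{i, …, k}` part of the `ℓ`-th rim iff `closeCount M p < ℓ` and
`2ℓ + s ≤ p + 1`, and in its `{j, …, k + 1}` part iff `n < ℓ + openCount M (2n - p)` and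
`2ℓ + s ≤ p`. Counting these `ℓ` gives `⌊(h + 1 - s)/2⌋ + ⌊(h' - s)/2⌋` with `h`, `h'` the
heights at `p` and `2n - p`; both have the parity of `p`, so this is Rule A's `(h - s + h' - s)/2`.
-/

open Finset

def openCount (M : Finset (ℕ × ℕ)) (m : ℕ) : ℕ :=
  ((M.image Prod.fst).filter fun t => t ≤ m).card

def closeCount (M : Finset (ℕ × ℕ)) (m : ℕ) : ℕ := #(M.filter fun q => q.2 ≤ m)

def crossCount (M : Finset (ℕ × ℕ)) (m : ℕ) : ℕ := #(M.filter fun q => q.1 ≤ m ∧ m < q.2)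

def spanCount (n : ℕ) (M : Finset (ℕ × ℕ)) (p : ℕ) : ℕ :=
  #(M.filter fun q => q.1 ≤ p ∧ 2 * n + 1 - p ≤ q.2)

theorem card_filter_add_card_filter_eq {α : Type*} [DecidableEq α] {s : Finset α} {P Q R : α → Prop}
    [DecidablePred P] [DecidablePred Q] [DecidablePred R]
    (hPQ : ∀ a ∈ s, P a → ¬Q a) (hR : ∀ a ∈ s, R a ↔ P a ∨ Q a) :
    #(s.filter P) + #(s.filter Q) = #(s.filter R) := by
  rw [← card_union_of_disjoint (disjoint_filter.2 hPQ), ← filter_or]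
  exact congrArg card (filter_congr fun a ha => (hR a ha).symm)

theorem sup_filter_sup_eq {α : Type*} {s : Finset α} {f g : α → ℕ} {b : α} (hb : b ∈ s)
    (hf : ∀ a ∈ s, f a ≤ f b) (hg : ∀ a ∈ s, f a = f b → g a ≤ g b) :
    (s.filter fun a => f a = s.sup f).sup g = g b := by
  rw [le_antisymm (Finset.sup_le hf) (le_sup hb)]
  exact le_antisymm (Finset.sup_le fun a ha => hg a (mem_filter.1 ha).1 (mem_filter.1 ha).2)
    (le_sup (mem_filter.2 ⟨hb, rfl⟩))

theorem exists_eq_of_le_of_le_of_forall_succ_le {f : ℕ → ℕ} (hf : ∀ m, f (m + 1) ≤ f m + 1)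
    {a b L : ℕ} (hab : a ≤ b) (ha : f a ≤ L) (hb : L ≤ f b) : ∃ m ∈ Icc a b, f m = L := by
  induction b, hab using Nat.le_induction with
  | base => exact ⟨a, left_mem_Icc.2 le_rfl, le_antisymm ha hb⟩
  | succ b hab ih =>
    by_cases hL : L ≤ f b
    · obtain ⟨m, hm, hfm⟩ := ih hL
      exact ⟨m, Icc_subset_Icc_right (Nat.le_succ b) hm, hfm⟩
    · exact ⟨b + 1, mem_Icc.2 ⟨by omega, le_rfl⟩, by have := hf b; omega⟩

theorem exists_eq_of_le_of_le_of_forall_le_succ {f : ℕ → ℕ} (hf : ∀ m, f m ≤ f (m + 1) + 1)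
    {a b L : ℕ} (hab : a ≤ b) (ha : L ≤ f a) (hb : f b ≤ L) : ∃ m ∈ Icc a b, f m = L := by
  induction b, hab using Nat.le_induction with
  | base => exact ⟨a, left_mem_Icc.2 le_rfl, le_antisymm hb ha⟩
  | succ b hab ih =>
    by_cases hL : f b ≤ L
    · obtain ⟨m, hm, hfm⟩ := ih hL
      exact ⟨m, Icc_subset_Icc_right (Nat.le_succ b) hm, hfm⟩
    · exact ⟨b + 1, mem_Icc.2 ⟨by omega, le_rfl⟩, by have := hf b; omega⟩

section Matching

variable {n : ℕ} {M : Finset (ℕ × ℕ)}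

theorem IsMatching.bounds (hM : IsMatching n M) {q : ℕ × ℕ} (hq : q ∈ M) :
    1 ≤ q.1 ∧ q.1 < q.2 ∧ q.2 ≤ 2 * n :=
  hM.1 q hq

theorem IsMatching.eq_of_endpoint (hM : IsMatching n M) {q r : ℕ × ℕ} {x : ℕ} (hq : q ∈ M)
    (hr : r ∈ M) (hqx : q.1 = x ∨ q.2 = x) (hrx : r.1 = x ∨ r.2 = x) : q = r := by
  have := hM.bounds hq
  obtain ⟨w, -, hw⟩ := hM.2.1 x (by omega) (by omega)
  rw [hw q ⟨hq, hqx⟩, hw r ⟨hr, hrx⟩]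

theorem IsMatching.snd_lt_snd (hM : IsMatching n M) {q r : ℕ × ℕ} (hq : q ∈ M) (hr : r ∈ M)
    (h1 : r.1 < q.1) (h2 : q.1 < r.2) : q.2 < r.2 := by
  by_contra! h
  rcases h.eq_or_lt with h | h
  · have := congrArg Prod.fst (hM.eq_of_endpoint hr hq (Or.inr h) (Or.inr rfl))
    omega
  · exact hM.2.2 r hr q hq ⟨h1, h2, h⟩

theorem IsMatching.fst_lt_fst (hM : IsMatching n M) {q r : ℕ × ℕ} (hq : q ∈ M) (hr : r ∈ M)
    (h1 : r.1 < q.2) (h2 : q.2 < r.2) : r.1 < q.1 := by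
  by_contra! h
  rcases h.eq_or_lt with h | h
  · have := congrArg Prod.snd (hM.eq_of_endpoint hq hr (Or.inl h) (Or.inl rfl))
    omega
  · exact hM.2.2 q hq r hr ⟨h, h1, h2⟩

theorem IsMatching.openCount_eq (hM : IsMatching n M) (m : ℕ) :
    openCount M m = #(M.filter fun q => q.1 ≤ m) := by
  rw [openCount, filter_image]
  exact card_image_of_injOn fun q hq r hr h =>
    hM.eq_of_endpoint (mem_filter.1 hq).1 (mem_filter.1 hr).1 (Or.inl rfl) (Or.inl h.symm)

theorem IsMatching.card_fst_eq_add_card_snd_eq (hM : IsMatching n M) (x : ℕ) :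
    #(M.filter fun q => q.1 = x) + #(M.filter fun q => q.2 = x) =
      if 1 ≤ x ∧ x ≤ 2 * n then 1 else 0 := by
  rw [card_filter_add_card_filter_eq (s := M) (P := fun q => q.1 = x) (Q := fun q => q.2 = x)
    (R := fun q => q.1 = x ∨ q.2 = x) (fun q hq _ _ => by have := hM.bounds hq; omega)
    fun _ _ => Iff.rfl]
  split_ifs with hx
  · obtain ⟨w, hw, huniq⟩ := hM.2.1 x hx.1 hx.2
    exact card_eq_one.2 ⟨w, eq_singleton_iff_unique_mem.2
      ⟨mem_filter.2 hw, fun q hq => huniq q (mem_filter.1 hq)⟩⟩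
  · exact card_eq_zero.2 <| filter_eq_empty_iff.2 fun q hq _ => hx (by have := hM.bounds hq; omega)

theorem IsMatching.openCount_succ (hM : IsMatching n M) (m : ℕ) :
    openCount M (m + 1) = openCount M m + #(M.filter fun q => q.1 = m + 1) := by
  rw [hM.openCount_eq, hM.openCount_eq]
  exact (card_filter_add_card_filter_eq (fun _ _ _ _ => by omega) fun _ _ => by omega).symm

theorem closeCount_succ (m : ℕ) :
    closeCount M (m + 1) = closeCount M m + #(M.filter fun q => q.2 = m + 1) :=
  (card_filter_add_card_filter_eq (fun _ _ _ _ => by omega) fun _ _ => by omega).symm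

theorem IsMatching.openCount_add_closeCount (hM : IsMatching n M) (m : ℕ) :
    openCount M m + closeCount M m = min m (2 * n) := by
  induction m with
  | zero =>
    rw [hM.openCount_eq, closeCount]
    simp only [nonpos_iff_eq_zero, Nat.zero_min, Nat.add_eq_zero_iff, card_eq_zero,
      filter_eq_empty_iff]
    exact ⟨fun q hq => by have := hM.bounds hq; omega, fun q hq => by have := hM.bounds hq; omega⟩
  | succ m ih =>
    have := hM.card_fst_eq_add_card_snd_eq (m + 1)
    rw [hM.openCount_succ, closeCount_succ]
    split_ifs at this <;> omega

theorem openCount_mono : Monotone (openCount M) := fun _ _ h =>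
  card_le_card <| monotone_filter_right _ fun _ _ ht => le_trans ht h

theorem closeCount_mono : Monotone (closeCount M) := fun _ _ h =>
  card_le_card <| monotone_filter_right _ fun _ _ hq => le_trans hq h

theorem IsMatching.card_eq (hM : IsMatching n M) : #M = n := by
  have hsum := hM.openCount_add_closeCount (2 * n)
  have hopen : openCount M (2 * n) = #M := by
    rw [hM.openCount_eq, filter_true_of_mem fun q hq => by have := hM.bounds hq; omega]
  have hclose : closeCount M (2 * n) = #M := by
    rw [closeCount, filter_true_of_mem fun q hq => (hM.bounds hq).2.2]
  omega

theorem IsMatching.openCount_le (hM : IsMatching n M) (m : ℕ) : openCount M m ≤ n :=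
  hM.card_eq ▸ hM.openCount_eq m ▸ card_filter_le _ _

theorem IsMatching.closeCount_le (hM : IsMatching n M) (m : ℕ) : closeCount M m ≤ n :=
  hM.card_eq ▸ card_filter_le _ _

theorem IsMatching.crossCount_add_closeCount (hM : IsMatching n M) (m : ℕ) :
    crossCount M m + closeCount M m = openCount M m := by
  rw [hM.openCount_eq]
  exact card_filter_add_card_filter_eq (fun _ _ _ _ => by omega)
    fun q hq => by have := hM.bounds hq; omega

theorem IsMatching.openCount_succ_le (hM : IsMatching n M) (m : ℕ) :
    openCount M (m + 1) ≤ openCount M m + 1 := by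
  have := hM.card_fst_eq_add_card_snd_eq (m + 1)
  rw [hM.openCount_succ]
  split_ifs at this <;> omega

theorem IsMatching.closeCount_succ_le (hM : IsMatching n M) (m : ℕ) :
    closeCount M (m + 1) ≤ closeCount M m + 1 := by
  have := hM.card_fst_eq_add_card_snd_eq (m + 1)
  rw [closeCount_succ]
  split_ifs at this <;> omega

theorem IsMatching.crossCount_succ_le (hM : IsMatching n M) (m : ℕ) :
    crossCount M (m + 1) ≤ crossCount M m + 1 := by
  have := hM.crossCount_add_closeCount m
  have := hM.crossCount_add_closeCount (m + 1)
  have := hM.openCount_succ_le m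
  have := closeCount_mono (M := M) (m.le_add_right 1)
  omega

theorem IsMatching.crossCount_le_succ (hM : IsMatching n M) (m : ℕ) :
    crossCount M m ≤ crossCount M (m + 1) + 1 := by
  have := hM.crossCount_add_closeCount m
  have := hM.crossCount_add_closeCount (m + 1)
  have := hM.closeCount_succ_le m
  have := openCount_mono (M := M) (m.le_add_right 1)
  omega

theorem spanCount_le_crossCount {p m : ℕ} (hpm : p ≤ m) (hmp : m + p ≤ 2 * n) :
    spanCount n M p ≤ crossCount M m :=
  card_le_card <| monotone_filter_right _ fun _ _ hq => ⟨by omega, by omega⟩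

/-- Arches over `q.1 - 1` or over `q.2` enclose `q`, hence also lie over `m`; `q` lies over `m`
only. -/
theorem IsMatching.crossCount_lt_of_mem (hM : IsMatching n M) {q : ℕ × ℕ} (hq : q ∈ M) {m : ℕ}
    (h1 : q.1 ≤ m) (h2 : m < q.2) :
    crossCount M (q.1 - 1) < crossCount M m ∧ crossCount M q.2 < crossCount M m := by
  have hqb := hM.bounds hq
  have hqm : q ∈ M.filter fun r => r.1 ≤ m ∧ m < r.2 := mem_filter.2 ⟨hq, h1, h2⟩
  constructor
  · refine card_lt_card <| (ssubset_iff_of_subset fun r hr => ?_).2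
      ⟨q, hqm, fun h => by have := (mem_filter.1 h).2; omega⟩
    obtain ⟨hr, hr1, hr2⟩ := mem_filter.1 hr
    have hne : r.2 ≠ q.1 := fun h => by
      have := congrArg Prod.fst (hM.eq_of_endpoint hr hq (Or.inr h) (Or.inl rfl))
      omega
    have := hM.snd_lt_snd hq hr (by omega) (by omega)
    exact mem_filter.2 ⟨hr, by omega, by omega⟩
  · refine card_lt_card <| (ssubset_iff_of_subset fun r hr => ?_).2
      ⟨q, hqm, fun h => by have := (mem_filter.1 h).2; omega⟩
    obtain ⟨hr, hr1, hr2⟩ := mem_filter.1 hr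
    have hne : r.1 ≠ q.2 := fun h => by
      have := congrArg Prod.snd (hM.eq_of_endpoint hr hq (Or.inl h) (Or.inr rfl))
      omega
    have := hM.fst_lt_fst hq hr (by omega) hr2
    exact mem_filter.2 ⟨hr, by omega, by omega⟩

/-- By `crossCount_lt_of_mem`, every arch over a position of `[p, 2n - p]` crossed by the
fewest arches spans that interval. -/
theorem IsMatching.exists_crossCount_le_spanCount (hM : IsMatching n M) {p : ℕ} (hp : p ≤ n) :
    ∃ m, p ≤ m ∧ m + p ≤ 2 * n ∧ crossCount M m ≤ spanCount n M p := by
  obtain ⟨m, hm, hmin⟩ := exists_min_image (Icc p (2 * n - p)) (crossCount M)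
    ⟨p, mem_Icc.2 ⟨le_rfl, by omega⟩⟩
  obtain ⟨hpm, hmn⟩ := mem_Icc.1 hm
  refine ⟨m, hpm, by omega, card_le_card fun q hq => ?_⟩
  obtain ⟨hq, h1, h2⟩ := mem_filter.1 hq
  obtain ⟨hlt1, hlt2⟩ := hM.crossCount_lt_of_mem hq h1 h2
  have := hM.bounds hq
  refine mem_filter.2 ⟨hq, ?_, ?_⟩
  · by_contra
    exact (hmin (q.1 - 1) (mem_Icc.2 ⟨by omega, by omega⟩)).not_gt hlt1
  · by_contra
    exact (hmin q.2 (mem_Icc.2 ⟨by omega, by omega⟩)).not_gt hlt2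

theorem mem_cellsM {u : ℕ × ℕ} :
    u ∈ cellsM n M ↔ (1 ≤ u.1 ∧ u.1 ≤ n) ∧ (1 ≤ u.2 ∧ u.2 ≤ n) ∧
      openCount M (n - u.1 + u.2) ≤ n - u.1 := by
  rw [cellsM, mem_filter, mem_product, mem_Icc, mem_Icc, openCount, and_assoc]

/-- Along the diagonal of a box `(x, y)` the index `n - x + y` is constant. -/
theorem IsMatching.depthM_eq (hM : IsMatching n M) {u : ℕ × ℕ} (hu : u ∈ cellsM n M) :
    depthM n M u = n + 1 - u.1 - openCount M (n - u.1 + u.2) := by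
  obtain ⟨⟨hx1, hxn⟩, ⟨hy1, hyn⟩, hopen⟩ := mem_cellsM.1 hu
  have hsum := hM.openCount_add_closeCount (n - u.1 + u.2)
  have hclose := hM.closeCount_le (n - u.1 + u.2)
  rw [depthM, ← card_range (n + 1 - u.1 - openCount M (n - u.1 + u.2))]
  congr 1
  ext t
  have hdiag : u.1 + t ≤ n → n - (u.1 + t) + (u.2 + t) = n - u.1 + u.2 := by omega
  simp only [mem_filter, mem_range, mem_cellsM]
  constructor
  · rintro ⟨-, ⟨-, hxt⟩, -, hopen'⟩
    rw [hdiag hxt] at hopen'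
    omega
  · intro ht
    rw [hdiag (by omega)]
    omega

theorem IsMatching.mem_rimM (hM : IsMatching n M) {ℓ : ℕ} (hℓ : 1 ≤ ℓ) {u : ℕ × ℕ} :
    u ∈ rimM n M ℓ ↔ ∃ m, ℓ ≤ closeCount M m ∧ openCount M m + ℓ ≤ n ∧
      u.1 + ℓ + openCount M m = n + 1 ∧ u.2 + ℓ = closeCount M m + 1 := by
  rw [rimM, mem_filter]
  constructor
  · rintro ⟨hu, hdepth⟩
    rw [hM.depthM_eq hu] at hdepth
    obtain ⟨⟨hx1, hxn⟩, ⟨hy1, hyn⟩, hopen⟩ := mem_cellsM.1 hu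
    have := hM.openCount_add_closeCount (n - u.1 + u.2)
    exact ⟨n - u.1 + u.2, by omega, by omega, by omega, by omega⟩
  · rintro ⟨m, hclose, hopen, hx, hy⟩
    have hsum := hM.openCount_add_closeCount m
    have := hM.closeCount_le m
    have hm : n - u.1 + u.2 = m := by omega
    have hu : u ∈ cellsM n M :=
      mem_cellsM.2 ⟨⟨by omega, by omega⟩, ⟨by omega, by omega⟩, by rw [hm]; omega⟩
    refine ⟨hu, ?_⟩
    rw [hM.depthM_eq hu, hm]
    omega

theorem IsMatching.kLab_le_iff (hM : IsMatching n M) {ℓ p : ℕ} (hℓ : 1 ≤ ℓ) (hp : p ≤ n) :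
    kLab n M ℓ ≤ p ↔ ∃ m, ℓ ≤ closeCount M m ∧ openCount M m + ℓ ≤ n ∧
      crossCount M m + 2 * ℓ ≤ p + 1 := by
  rw [kLab, tsub_le_iff_tsub_le, Finset.le_sup_iff (by rw [Nat.bot_eq_zero]; omega)]
  constructor
  · rintro ⟨u, hu, hlabel⟩
    obtain ⟨m, hclose, hopen, hx, hy⟩ := (hM.mem_rimM hℓ).1 hu
    have := hM.crossCount_add_closeCount m
    exact ⟨m, hclose, hopen, by omega⟩
  · rintro ⟨m, hclose, hopen, hcross⟩
    have := hM.crossCount_add_closeCount m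
    refine ⟨(n + 1 - ℓ - openCount M m, closeCount M m + 1 - ℓ),
      (hM.mem_rimM hℓ).2 ⟨m, hclose, hopen, by dsimp only; omega, by dsimp only; omega⟩, ?_⟩
    dsimp only
    omega

theorem IsMatching.iLab_eq (hM : IsMatching n M) {ℓ u : ℕ} (hℓ : 1 ≤ ℓ)
    (hu : closeCount M u = ℓ) (hfirst : ∀ m < u, closeCount M m < ℓ)
    (hopen : openCount M u + ℓ ≤ n) : iLab n M ℓ = u - 1 := by
  have hb : (n + 1 - ℓ - openCount M u, 1) ∈ rimM n M ℓ :=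
    (hM.mem_rimM hℓ).2 ⟨u, hu.ge, hopen, by dsimp only; omega, by dsimp only; omega⟩
  have := hM.openCount_add_closeCount u
  rw [iLab, sup_filter_sup_eq hb]
  · dsimp only
    omega
  · intro v hv
    obtain ⟨m, hclose, -, hx, -⟩ := (hM.mem_rimM hℓ).1 hv
    have : openCount M u ≤ openCount M m :=
      openCount_mono (not_lt.1 fun h => (hfirst m h).not_ge hclose)
    dsimp only
    omega
  · intro v hv hx
    obtain ⟨m, hclose, -, -, hy⟩ := (hM.mem_rimM hℓ).1 hv
    dsimp only at hx ⊢
    omega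

theorem IsMatching.le_iLab_iff (hM : IsMatching n M) {ℓ p : ℕ} (hℓ : 1 ≤ ℓ)
    (hrim : ∃ m, ℓ ≤ closeCount M m ∧ openCount M m + ℓ ≤ n) :
    p ≤ iLab n M ℓ ↔ closeCount M p < ℓ := by
  classical
  obtain ⟨m₀, hclose₀, hopen₀⟩ := hrim
  have hex : ∃ m, ℓ ≤ closeCount M m := ⟨m₀, hclose₀⟩
  have hspec := Nat.find_spec hex
  have hpos : Nat.find hex ≠ 0 := fun h => by
    have := hM.openCount_add_closeCount 0
    rw [h] at hspec
    omega
  have hprev := Nat.find_min hex (Nat.sub_one_lt hpos)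
  have hstep := hM.closeCount_succ_le (Nat.find hex - 1)
  rw [Nat.sub_add_cancel (Nat.one_le_iff_ne_zero.2 hpos)] at hstep
  have hopen := openCount_mono (M := M) (Nat.find_min' hex hclose₀)
  rw [hM.iLab_eq hℓ (by omega) (fun m hm => not_le.1 (Nat.find_min hex hm)) (by omega),
    Nat.le_sub_one_iff_lt (Nat.pos_of_ne_zero hpos), Nat.lt_find_iff]
  exact ⟨fun h => not_le.1 (h p le_rfl),
    fun h m hm => not_le.2 (lt_of_le_of_lt (closeCount_mono hm) h)⟩

theorem IsMatching.jLab_eq (hM : IsMatching n M) {ℓ v : ℕ} (hℓ : 1 ≤ ℓ)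
    (hv : openCount M v + ℓ = n) (hlast : ∀ m, openCount M m + ℓ ≤ n → m ≤ v)
    (hclose : ℓ ≤ closeCount M v) : jLab n M ℓ = 2 * n - 1 - v := by
  have hb : (1, closeCount M v + 1 - ℓ) ∈ rimM n M ℓ :=
    (hM.mem_rimM hℓ).2 ⟨v, hclose, hv.le, by dsimp only; omega, by dsimp only; omega⟩
  have := hM.openCount_add_closeCount v
  have := hM.closeCount_le v
  rw [jLab, sup_filter_sup_eq hb]
  · dsimp only
    omega
  · intro w hw
    obtain ⟨m, -, hopen, -, hy⟩ := (hM.mem_rimM hℓ).1 hw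
    have := closeCount_mono (M := M) (hlast m hopen)
    dsimp only
    omega
  · intro w hw hy
    obtain ⟨m, -, hopen, hx, -⟩ := (hM.mem_rimM hℓ).1 hw
    dsimp only at hy ⊢
    omega

theorem IsMatching.le_jLab_iff (hM : IsMatching n M) {ℓ p : ℕ} (hℓ : 1 ≤ ℓ)
    (hrim : ∃ m, ℓ ≤ closeCount M m ∧ openCount M m + ℓ ≤ n) :
    p ≤ jLab n M ℓ ↔ n < ℓ + openCount M (2 * n - p) := by
  classical
  obtain ⟨m₀, hclose₀, hopen₀⟩ := hrim
  have hbelow : ∀ m, openCount M m + ℓ ≤ n → m < 2 * n := fun m hm => by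
    have := hM.openCount_add_closeCount m
    have := hM.closeCount_le m
    omega
  obtain ⟨v, hv, hlast⟩ : ∃ v, openCount M v + ℓ ≤ n ∧ ∀ m, openCount M m + ℓ ≤ n → m ≤ v :=
    ⟨_, Nat.findGreatest_spec (P := fun m => openCount M m + ℓ ≤ n) (hbelow m₀ hopen₀).le hopen₀,
      fun m hm => Nat.le_findGreatest (hbelow m hm).le hm⟩
  have hnext : n < openCount M (v + 1) + ℓ := by
    by_contra! h
    have := hlast (v + 1) h
    omega
  have := hM.openCount_succ_le v
  have := closeCount_mono (M := M) (hlast m₀ hopen₀)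
  have := hbelow v hv
  rw [hM.jLab_eq hℓ (by omega) hlast (by omega)]
  constructor
  · intro h
    by_contra! h'
    have := hlast (2 * n - p) (by omega)
    omega
  · intro h
    by_contra! h'
    have := openCount_mono (M := M) (show 2 * n - p ≤ v by omega)
    omega

theorem IsMatching.spanCount_add_two_mul_le_or (hM : IsMatching n M) {ℓ p m : ℕ} (hp : p ≤ n)
    (hclose : ℓ ≤ closeCount M m) (hopen : openCount M m + ℓ ≤ n) :
    spanCount n M p + 2 * ℓ ≤ p ∨ spanCount n M p ≤ crossCount M m := by
  have := hM.openCount_add_closeCount p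
  have := hM.crossCount_add_closeCount p
  have := hM.openCount_add_closeCount (2 * n - p)
  have := hM.crossCount_add_closeCount (2 * n - p)
  have := spanCount_le_crossCount (n := n) (M := M) (le_refl p) (by omega)
  have := spanCount_le_crossCount (n := n) (M := M) (p := p) (m := 2 * n - p) (by omega) (by omega)
  rcases lt_or_ge m p with hmp | hpm
  · have := closeCount_mono (M := M) hmp.le
    omega
  rcases le_or_gt (m + p) (2 * n) with hmn | hnm
  · exact Or.inr (spanCount_le_crossCount hpm hmn)
  · have := openCount_mono (M := M) (show 2 * n - p ≤ m by omega)
    omega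

theorem IsMatching.kLab_le_and_le_iLab_iff (hM : IsMatching n M) {ℓ p : ℕ} (hℓ : 1 ≤ ℓ)
    (hp : p ≤ n) :
    kLab n M ℓ ≤ p ∧ p ≤ iLab n M ℓ ↔
      closeCount M p < ℓ ∧ 2 * ℓ + spanCount n M p ≤ p + 1 := by
  constructor
  · rintro ⟨hk, hi⟩
    obtain ⟨m, hclose, hopen, hcross⟩ := (hM.kLab_le_iff hℓ (by omega)).1 hk
    refine ⟨(hM.le_iLab_iff hℓ ⟨m, hclose, hopen⟩).1 hi, ?_⟩
    rcases hM.spanCount_add_two_mul_le_or hp hclose hopen with h | h <;> omega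
  · rintro ⟨hp', hspan⟩
    -- the height falls from above `p + 1 - 2ℓ` at `p` to at most the span count, hence hits it
    obtain ⟨ms, hpms, hmsn, hms⟩ := hM.exists_crossCount_le_spanCount (p := p) (by omega)
    have := hM.openCount_add_closeCount p
    have := hM.crossCount_add_closeCount p
    obtain ⟨m, hm, hcross⟩ := exists_eq_of_le_of_le_of_forall_le_succ hM.crossCount_le_succ hpms
      (L := p + 1 - 2 * ℓ) (by omega) (by omega)
    obtain ⟨hpm, hmms⟩ := mem_Icc.1 hm
    have := hM.openCount_add_closeCount m
    have := hM.crossCount_add_closeCount m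
    have hpm' : p < m := lt_of_le_of_ne hpm fun h => by subst h; omega
    have hclose : ℓ ≤ closeCount M m := by omega
    have hopen : openCount M m + ℓ ≤ n := by omega
    exact ⟨(hM.kLab_le_iff hℓ (by omega)).2 ⟨m, hclose, hopen, by omega⟩,
      (hM.le_iLab_iff hℓ ⟨m, hclose, hopen⟩).2 hp'⟩

theorem IsMatching.kLab_lt_and_le_jLab_iff (hM : IsMatching n M) {ℓ p : ℕ} (hℓ : 1 ≤ ℓ)
    (hp1 : 1 ≤ p) (hp : p ≤ n) :
    kLab n M ℓ + 1 ≤ p ∧ p ≤ jLab n M ℓ ↔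
      n < ℓ + openCount M (2 * n - p) ∧ 2 * ℓ + spanCount n M p ≤ p := by
  constructor
  · rintro ⟨hk, hj⟩
    obtain ⟨m, hclose, hopen, hcross⟩ := (hM.kLab_le_iff hℓ (p := p - 1) (by omega)).1 (by omega)
    refine ⟨(hM.le_jLab_iff hℓ ⟨m, hclose, hopen⟩).1 hj, ?_⟩
    rcases hM.spanCount_add_two_mul_le_or hp hclose hopen with h | h <;> omega
  · rintro ⟨hp', hspan⟩
    -- the height rises from at most the span count to above `p - 2ℓ` at `2n - p`, hence hits it
    obtain ⟨ms, hpms, hmsn, hms⟩ := hM.exists_crossCount_le_spanCount (p := p) (by omega)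
    have := hM.openCount_add_closeCount (2 * n - p)
    have := hM.crossCount_add_closeCount (2 * n - p)
    obtain ⟨m, hm, hcross⟩ := exists_eq_of_le_of_le_of_forall_succ_le hM.crossCount_succ_le
      (show ms ≤ 2 * n - p by omega) (L := p - 2 * ℓ) (by omega) (by omega)
    obtain ⟨hmsm, hmn⟩ := mem_Icc.1 hm
    have := hM.openCount_add_closeCount m
    have := hM.crossCount_add_closeCount m
    have hmn' : m < 2 * n - p := lt_of_le_of_ne hmn fun h => by subst h; omega
    have hclose : ℓ ≤ closeCount M m := by omega
    have hopen : openCount M m + ℓ ≤ n := by omega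
    have hk := (hM.kLab_le_iff hℓ (p := p - 1) (by omega)).2 ⟨m, hclose, hopen, by omega⟩
    exact ⟨by omega, (hM.le_jLab_iff hℓ ⟨m, hclose, hopen⟩).2 hp'⟩

theorem mA_eq {p : ℕ} (hp : p ≤ n) :
    mA n M p = (crossCount M p - spanCount n M p +
      (crossCount M (2 * n - p) - spanCount n M p)) / 2 := by
  have hleft : #(M.filter fun q => q.1 ≤ p ∧ p < q.2 ∧ q.2 < 2 * n + 1 - p) +
      spanCount n M p = crossCount M p :=
    card_filter_add_card_filter_eq (fun _ _ _ _ => by omega) fun _ _ => by omega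
  have hright : #(M.filter fun q => p < q.1 ∧ q.1 < 2 * n + 1 - p ∧ 2 * n + 1 - p ≤ q.2) +
      spanCount n M p = crossCount M (2 * n - p) :=
    card_filter_add_card_filter_eq (fun _ _ _ _ => by omega) fun _ _ => by omega
  rw [mA]
  omega

theorem IsMatching.mB_eq (hM : IsMatching n M) {p : ℕ}
    (hp1 : 1 ≤ p) (hp : p + 1 ≤ n) :
    mB n M p = ((p + 1 - spanCount n M p) / 2 - closeCount M p) +
      ((p - spanCount n M p) / 2 - (n - openCount M (2 * n - p))) := by
  have hfirst : (Icc 1 n).filter (fun ℓ => kLab n M ℓ ≤ p ∧ p ≤ iLab n M ℓ) =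
      Icc (closeCount M p + 1) ((p + 1 - spanCount n M p) / 2) := by
    ext ℓ
    simp only [mem_filter, mem_Icc]
    constructor
    · rintro ⟨hℓ, h⟩
      have := (hM.kLab_le_and_le_iLab_iff hℓ.1 (by omega)).1 h
      omega
    · intro hℓ
      exact ⟨by omega, (hM.kLab_le_and_le_iLab_iff (by omega) (by omega)).2 ⟨by omega, by omega⟩⟩
  have hsecond : (Icc 1 n).filter (fun ℓ => kLab n M ℓ + 1 ≤ p ∧ p ≤ jLab n M ℓ) =
      Icc (n - openCount M (2 * n - p) + 1) ((p - spanCount n M p) / 2) := by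
    ext ℓ
    simp only [mem_filter, mem_Icc]
    constructor
    · rintro ⟨hℓ, h⟩
      have := (hM.kLab_lt_and_le_jLab_iff hℓ.1 hp1 (by omega)).1 h
      omega
    · intro hℓ
      exact ⟨by omega, (hM.kLab_lt_and_le_jLab_iff (by omega) hp1 (by omega)).2 ⟨by omega, by omega⟩⟩
  rw [mB, sum_add_distrib, sum_boole, sum_boole, hfirst, hsecond, Nat.card_Icc, Nat.card_Icc]
  simp only [Nat.cast_id]
  omega

end Matching

/-- Rule A and Rule B define the same multiplicities: `m_p^{(A)}(π) = m_p^{(B)}(π)`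
for `1 ≤ p ≤ n - 1`. -/
theorem ruleA_eq_ruleB (n : ℕ) (M : Finset (ℕ × ℕ)) (hM : IsMatching n M) :
    ∀ p, 1 ≤ p → p ≤ n - 1 → mA n M p = mB n M p := by
  intro p hp1 hpn
  rw [mA_eq (by omega), hM.mB_eq hp1 (by omega)]
  have := hM.openCount_add_closeCount p
  have := hM.crossCount_add_closeCount p
  have := hM.openCount_add_closeCount (2 * n - p)
  have := hM.crossCount_add_closeCount (2 * n - p)
  have := hM.openCount_le (2 * n - p)
  have := spanCount_le_crossCount (n := n) (M := M) (le_refl p) (show p + p ≤ 2 * n by omega)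
  have := spanCount_le_crossCount (n := n) (M := M) (p := p) (m := 2 * n - p) (by omega) (by omega)
  omega
end

section
/- For any matching π of size n, the sum over p of m_p(π) is at most d(π), the number of boxes of the Young diagram Y(π), and d(π) minus this sum is an even integer. -/
/-!
The boxes of depth `ℓ` form the outer rim of the diagram `D` of boxes of depth at least `ℓ`.
If `R` and `A` are the largest `x` and `y` in `D`, its outer rim has `R + A - 1` boxes: translation
by `(1, 1)` matches the rest of `D` with the boxes of `D` off the hook `x = 1 ∨ y = 1`. The
bottom-left and top-right boxes of the rim are `(R, 1)` and `(1, A)`, so `i = n - R`, `j = n - A`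
and `k = n + 1 - m`, where `m ≤ R + A` is the largest `x + y` on the rim. Hence the rim contributes
`(m - R) + (m - A - 1)` to `∑ p, m_p(π)`, which is its size minus `2 (R + A - m)`.
All labels lie in `[1, n - 1]` since each box of `Y(π)` has `x + y ≤ n`: an initial segment of
`{1, …, 2n}` contains left endpoints of at least half of its points.
-/

open Finset

lemma lt_card_filter_range_iff {P : ℕ → Prop} [DecidablePred P] {N t : ℕ}
    (hP : ∀ a b, a ≤ b → P b → P a) (hN : ∀ s, P s → s < N) :
    t < #((range N).filter P) ↔ P t := by
  constructor
  · intro ht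
    by_contra h
    have hsub : (range N).filter P ⊆ range t := fun s hs =>
      mem_range.2 (lt_of_not_ge fun hts => h (hP t s hts (mem_filter.1 hs).2))
    have := card_le_card hsub
    rw [card_range] at this
    omega
  · intro h
    have hsub : range (t + 1) ⊆ (range N).filter P := fun s hs =>
      have hst : s ≤ t := Nat.lt_succ_iff.1 (mem_range.1 hs)
      mem_filter.2 ⟨mem_range.2 ((hst.trans_lt (hN t h))), hP s t hst h⟩
    simpa using card_le_card hsub

lemma card_filter_le_add_le (S : Finset ℕ) (a d : ℕ) :
    #(S.filter (· ≤ a + d)) ≤ #(S.filter (· ≤ a)) + d := by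
  calc #(S.filter (· ≤ a + d)) ≤ #(S.filter (· ≤ a) ∪ Ioc a (a + d)) :=
        card_le_card fun t ht => by
          obtain ⟨htS, htd⟩ := mem_filter.1 ht
          rcases le_or_gt t a with h | h
          · exact mem_union_left _ (mem_filter.2 ⟨htS, h⟩)
          · exact mem_union_right _ (mem_Ioc.2 ⟨h, htd⟩)
    _ ≤ #(S.filter (· ≤ a)) + d := (card_union_le _ _).trans (by rw [Nat.card_Ioc]; omega)

lemma card_filter_Icc_and (a b c d : ℕ) :
    #((Icc a b).filter fun p => c ≤ p ∧ p ≤ d) = min b d + 1 - max a c := by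
  rw [← Nat.card_Icc]
  congr 1
  ext p
  simp only [mem_filter, mem_Icc]
  omega

structure IsDiagram (D : Finset (ℕ × ℕ)) : Prop where
  one_le : ∀ u ∈ D, 1 ≤ u.1 ∧ 1 ≤ u.2
  mem_of_le : ∀ u ∈ D, ∀ v : ℕ × ℕ, 1 ≤ v.1 → 1 ≤ v.2 → v.1 ≤ u.1 → v.2 ≤ u.2 → v ∈ D

def outerRim (D : Finset (ℕ × ℕ)) : Finset (ℕ × ℕ) :=
  D.filter fun u => (u.1 + 1, u.2 + 1) ∉ D

/-- What is left of a diagram after removing its `L` outermost rims. -/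
def peelRims (D : Finset (ℕ × ℕ)) (L : ℕ) : Finset (ℕ × ℕ) :=
  D.filter fun u => (u.1 + L, u.2 + L) ∈ D

section Diagram

variable {D : Finset (ℕ × ℕ)}

lemma isDiagram_peelRims (hD : IsDiagram D) (L : ℕ) : IsDiagram (peelRims D L) where
  one_le u hu := hD.one_le u (mem_filter.1 hu).1
  mem_of_le u hu v hv1 hv2 h1 h2 := by
    obtain ⟨huD, huL⟩ := mem_filter.1 hu
    exact mem_filter.2 ⟨hD.mem_of_le u huD v hv1 hv2 h1 h2,
      hD.mem_of_le _ huL _ (by omega) (by omega) (by simp only; omega) (by simp only; omega)⟩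

lemma IsDiagram.card_filter_add_one_mem (hD : IsDiagram D) :
    #(D.filter fun u => (u.1 + 1, u.2 + 1) ∈ D) = #(D.filter fun u => 2 ≤ u.1 ∧ 2 ≤ u.2) := by
  refine card_nbij' (fun u => (u.1 + 1, u.2 + 1)) (fun u => (u.1 - 1, u.2 - 1)) ?_ ?_ ?_ ?_
  · intro u hu
    simp only [mem_coe, mem_filter] at hu ⊢
    have := hD.one_le u hu.1
    exact ⟨hu.2, by omega, by omega⟩
  · rintro ⟨x, y⟩ hu
    simp only [mem_coe, mem_filter] at hu ⊢
    obtain ⟨hxy, hx, hy⟩ := hu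
    rw [Nat.sub_add_cancel (by omega : 1 ≤ x), Nat.sub_add_cancel (by omega : 1 ≤ y)]
    exact ⟨hD.mem_of_le _ hxy _ (by omega) (by omega) (by omega) (by omega), hxy⟩
  · intro _ _
    simp
  · intro u hu
    simp only [mem_coe, mem_filter] at hu
    ext <;> simp only <;> omega

namespace IsDiagram

variable (hD : IsDiagram D) (hne : D.Nonempty)
include hD hne

lemma sup_fst_one_mem_outerRim : (D.sup Prod.fst, 1) ∈ outerRim D := by
  obtain ⟨u, hu, hsup⟩ := exists_mem_eq_sup D hne Prod.fst
  have hu1 := hD.one_le u hu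
  refine mem_filter.2 ⟨hD.mem_of_le u hu _ (by simp only; omega) le_rfl hsup.le hu1.2, fun h => ?_⟩
  have := le_sup (f := Prod.fst) h
  simp only at this
  omega

lemma one_sup_snd_mem_outerRim : (1, D.sup Prod.snd) ∈ outerRim D := by
  obtain ⟨u, hu, hsup⟩ := exists_mem_eq_sup D hne Prod.snd
  have hu1 := hD.one_le u hu
  refine mem_filter.2 ⟨hD.mem_of_le u hu _ le_rfl (by simp only; omega) hu1.1 hsup.le, fun h => ?_⟩
  have := le_sup (f := Prod.snd) h
  simp only at this
  omega

lemma card_hook_add_one :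
    #(D.filter fun u => ¬(2 ≤ u.1 ∧ 2 ≤ u.2)) + 1 = D.sup Prod.fst + D.sup Prod.snd := by
  set R := D.sup Prod.fst
  set A := D.sup Prod.snd
  have hR := (mem_filter.1 (hD.sup_fst_one_mem_outerRim hne)).1
  have hA := (mem_filter.1 (hD.one_sup_snd_mem_outerRim hne)).1
  have hhook : D.filter (fun u => ¬(2 ≤ u.1 ∧ 2 ≤ u.2)) = Icc 1 R ×ˢ {1} ∪ {1} ×ˢ Icc 2 A := by
    ext ⟨x, y⟩
    simp only [mem_filter, mem_union, mem_product, mem_Icc, mem_singleton]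
    constructor
    · rintro ⟨hu, hxy⟩
      have h1 := hD.one_le _ hu
      have hx : x ≤ R := le_sup (f := Prod.fst) hu
      have hy : y ≤ A := le_sup (f := Prod.snd) hu
      simp only at h1
      omega
    · rintro (⟨hx, rfl⟩ | ⟨rfl, hy⟩)
      · exact ⟨hD.mem_of_le _ hR _ hx.1 le_rfl hx.2 le_rfl, by omega⟩
      · exact ⟨hD.mem_of_le _ hA _ le_rfl (by omega) le_rfl hy.2, by omega⟩
  have hdisj : Disjoint (Icc 1 R ×ˢ {1}) ({1} ×ˢ Icc 2 A) := by
    rw [disjoint_left]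
    rintro ⟨x, y⟩ h1 h2
    simp only [mem_product, mem_Icc, mem_singleton] at h1 h2
    omega
  rw [hhook, card_union_of_disjoint hdisj, card_product, card_product]
  simp only [Nat.card_Icc, card_singleton]
  have hR1 : 1 ≤ R := (hD.one_le _ hR).1
  have hA1 : 1 ≤ A := (hD.one_le _ hA).2
  omega

lemma card_outerRim_add_one : #(outerRim D) + 1 = D.sup Prod.fst + D.sup Prod.snd := by
  have hrest := card_filter_add_card_filter_not (s := D) fun u => (u.1 + 1, u.2 + 1) ∈ D
  have hsplit := card_filter_add_card_filter_not (s := D) fun u => 2 ≤ u.1 ∧ 2 ≤ u.2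
  have := hD.card_filter_add_one_mem
  have := hD.card_hook_add_one hne
  rw [outerRim]
  omega

lemma outerRim_sup_fst : (outerRim D).sup Prod.fst = D.sup Prod.fst :=
  le_antisymm (sup_mono (filter_subset _ _))
    (le_sup (f := Prod.fst) (hD.sup_fst_one_mem_outerRim hne))

lemma outerRim_sup_snd : (outerRim D).sup Prod.snd = D.sup Prod.snd :=
  le_antisymm (sup_mono (filter_subset _ _))
    (le_sup (f := Prod.snd) (hD.one_sup_snd_mem_outerRim hne))

lemma sup_label_bottom_outerRim (n : ℕ) :
    ((outerRim D).filter fun u => u.1 = (outerRim D).sup Prod.fst).sup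
      (fun u => n + 1 - u.1 - u.2) = n - D.sup Prod.fst := by
  rw [hD.outerRim_sup_fst hne]
  apply le_antisymm
  · refine Finset.sup_le fun u hu => ?_
    obtain ⟨hu, hx⟩ := mem_filter.1 hu
    have := (hD.one_le u (mem_filter.1 hu).1).2
    omega
  · have := le_sup (f := fun u : ℕ × ℕ => n + 1 - u.1 - u.2)
      (s := (outerRim D).filter fun u => u.1 = D.sup Prod.fst)
      (mem_filter.2 ⟨hD.sup_fst_one_mem_outerRim hne, rfl⟩)
    simp only at this
    omega

lemma sup_label_top_outerRim (n : ℕ) :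
    ((outerRim D).filter fun u => u.2 = (outerRim D).sup Prod.snd).sup
      (fun u => n + 1 - u.1 - u.2) = n - D.sup Prod.snd := by
  rw [hD.outerRim_sup_snd hne]
  apply le_antisymm
  · refine Finset.sup_le fun u hu => ?_
    obtain ⟨hu, hy⟩ := mem_filter.1 hu
    have := (hD.one_le u (mem_filter.1 hu).1).1
    omega
  · have := le_sup (f := fun u : ℕ × ℕ => n + 1 - u.1 - u.2)
      (s := (outerRim D).filter fun u => u.2 = D.sup Prod.snd)
      (mem_filter.2 ⟨hD.one_sup_snd_mem_outerRim hne, rfl⟩)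
    simp only at this
    omega

end IsDiagram

lemma sup_add_outerRim_le (D : Finset (ℕ × ℕ)) :
    (outerRim D).sup (fun u => u.1 + u.2) ≤ D.sup Prod.fst + D.sup Prod.snd :=
  Finset.sup_le fun _ hu => add_le_add (le_sup (f := Prod.fst) (mem_filter.1 hu).1)
    (le_sup (f := Prod.snd) (mem_filter.1 hu).1)

end Diagram

lemma le_two_mul_card_filter_image_fst {M : Finset (ℕ × ℕ)} {m : ℕ}
    (hlt : ∀ q ∈ M, q.1 < q.2) (hinj : Set.InjOn Prod.fst (M : Set (ℕ × ℕ)))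
    (hcover : ∀ x ∈ Icc 1 m, ∃ q ∈ M, q.1 = x ∨ q.2 = x) :
    m ≤ 2 * #((M.image Prod.fst).filter fun t => t ≤ m) := by
  set F := M.filter fun q => q.1 ≤ m
  have hcov : Icc 1 m ⊆ F.image Prod.fst ∪ F.image Prod.snd := by
    intro x hx
    obtain ⟨q, hq, hqx | hqx⟩ := hcover x hx <;> have := hlt q hq <;> rw [mem_Icc] at hx
    · exact mem_union_left _ (mem_image.2 ⟨q, mem_filter.2 ⟨hq, by omega⟩, hqx⟩)
    · exact mem_union_right _ (mem_image.2 ⟨q, mem_filter.2 ⟨hq, by omega⟩, hqx⟩)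
  have hF : #(F.image Prod.fst) = #F := card_image_of_injOn (hinj.mono (filter_subset _ M))
  calc m = #(Icc 1 m) := by simp
    _ ≤ #(F.image Prod.fst) + #(F.image Prod.snd) := (card_le_card hcov).trans (card_union_le _ _)
    _ ≤ 2 * #(F.image Prod.fst) := by have := card_image_le (s := F) (f := Prod.snd); omega
    _ = 2 * #((M.image Prod.fst).filter fun t => t ≤ m) := by rw [filter_image]

section Cells

variable {n : ℕ} {M : Finset (ℕ × ℕ)}

lemma mem_cellsM_iff {u : ℕ × ℕ} :
    u ∈ cellsM n M ↔ ((1 ≤ u.1 ∧ u.1 ≤ n) ∧ (1 ≤ u.2 ∧ u.2 ≤ n)) ∧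
      #((M.image Prod.fst).filter fun t => t ≤ n - u.1 + u.2) ≤ n - u.1 := by
  simp only [cellsM, mem_filter, mem_product, mem_Icc]

variable (n M) in
lemma isDiagram_cellsM : IsDiagram (cellsM n M) where
  one_le u hu := by
    obtain ⟨⟨⟨hx, -⟩, ⟨hy, -⟩⟩, -⟩ := mem_cellsM_iff.1 hu
    exact ⟨hx, hy⟩
  mem_of_le u hu v hv1 hv2 h1 h2 := by
    obtain ⟨⟨⟨-, hun⟩, ⟨-, hu2n⟩⟩, hcount⟩ := mem_cellsM_iff.1 hu
    refine mem_cellsM_iff.2 ⟨⟨⟨hv1, by omega⟩, ⟨hv2, by omega⟩⟩, ?_⟩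
    calc #((M.image Prod.fst).filter fun t => t ≤ n - v.1 + v.2)
        ≤ #((M.image Prod.fst).filter fun t => t ≤ (n - u.1 + u.2) + (u.1 - v.1)) :=
          card_le_card (monotone_filter_right _ fun t _ ht => by omega)
      _ ≤ #((M.image Prod.fst).filter fun t => t ≤ n - u.1 + u.2) + (u.1 - v.1) :=
          card_filter_le_add_le _ _ _
      _ ≤ n - v.1 := by omega

lemma IsMatching.injOn_fst (hM : IsMatching n M) : Set.InjOn Prod.fst (M : Set (ℕ × ℕ)) :=
  fun q hq r hr hqr => by
  obtain ⟨hq1, hq2, hq3⟩ := hM.1 q hq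
  exact (hM.2.1 q.1 hq1 (by omega)).unique ⟨hq, Or.inl rfl⟩ ⟨hr, Or.inl hqr.symm⟩

lemma IsMatching.add_le_of_mem_cellsM (hM : IsMatching n M) {u : ℕ × ℕ} (hu : u ∈ cellsM n M) :
    u.1 + u.2 ≤ n := by
  obtain ⟨⟨⟨hx1, hxn⟩, ⟨hy1, hyn⟩⟩, hcount⟩ := mem_cellsM_iff.1 hu
  have := le_two_mul_card_filter_image_fst (m := n - u.1 + u.2) (fun q hq => (hM.1 q hq).2.1)
    hM.injOn_fst fun x hx => (hM.2.1 x (mem_Icc.1 hx).1 (by have := (mem_Icc.1 hx).2; omega)).exists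
  omega

lemma lt_depthM_iff {u : ℕ × ℕ} (hu : 1 ≤ u.1 ∧ 1 ≤ u.2) {t : ℕ} :
    t < depthM n M u ↔ (u.1 + t, u.2 + t) ∈ cellsM n M :=
  lt_card_filter_range_iff
    (fun s t hst h => (isDiagram_cellsM n M).mem_of_le _ h _ (by omega) (by omega)
      (by simp only; omega) (by simp only; omega))
    (fun t h => by have := mem_cellsM_iff.1 h; simp only at this; omega)

lemma depthM_mem_Icc {u : ℕ × ℕ} (hu : u ∈ cellsM n M) : depthM n M u ∈ Icc 1 n := by
  have hu1 := (isDiagram_cellsM n M).one_le u hu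
  have hpos : 0 < depthM n M u := (lt_depthM_iff hu1).2 (by simpa using hu)
  have hle : ¬ n < depthM n M u := fun h => by
    have := mem_cellsM_iff.1 ((lt_depthM_iff hu1).1 h)
    simp only at this
    omega
  exact mem_Icc.2 ⟨hpos, not_lt.1 hle⟩

variable (n M)

lemma card_cellsM_eq_sum_card_rimM : #(cellsM n M) = ∑ ℓ ∈ Icc 1 n, #(rimM n M ℓ) :=
  card_eq_sum_card_fiberwise fun _ hu => depthM_mem_Icc hu

lemma rimM_succ_eq_outerRim_peelRims (L : ℕ) :
    rimM n M (L + 1) = outerRim (peelRims (cellsM n M) L) := by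
  have hY := isDiagram_cellsM n M
  ext u
  simp only [rimM, outerRim, peelRims, mem_filter]
  constructor
  · rintro ⟨hu, hdepth⟩
    have hu1 := hY.one_le u hu
    refine ⟨⟨hu, (lt_depthM_iff hu1).1 (by omega)⟩, fun h => ?_⟩
    have := (lt_depthM_iff hu1 (t := L + 1)).2 (by simpa only [add_right_comm, add_assoc] using h.2)
    omega
  · rintro ⟨⟨hu, hL⟩, hL1⟩
    have hu1 := hY.one_le u hu
    refine ⟨hu, le_antisymm (not_lt.1 fun h => hL1 ?_) ((lt_depthM_iff hu1).2 hL)⟩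
    have hin := (lt_depthM_iff hu1 (t := L + 1)).1 h
    refine ⟨hY.mem_of_le _ hin _ (by omega) (by omega) (by simp only; omega)
      (by simp only; omega), ?_⟩
    simpa only [add_right_comm, add_assoc] using hin

end Cells

/-- The contribution of the `ℓ`-th rim to `∑ p ∈ [1, n - 1], m_p(π)`. -/
def rimWeight (n : ℕ) (M : Finset (ℕ × ℕ)) (ℓ : ℕ) : ℕ :=
  ∑ p ∈ Icc 1 (n - 1),
    ((if kLab n M ℓ ≤ p ∧ p ≤ iLab n M ℓ then 1 else 0) +
     (if kLab n M ℓ + 1 ≤ p ∧ p ≤ jLab n M ℓ then 1 else 0))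

section RimWeight

variable (n : ℕ) (M : Finset (ℕ × ℕ))

lemma sum_mB_eq_sum_rimWeight :
    ∑ p ∈ Icc 1 (n - 1), mB n M p = ∑ ℓ ∈ Icc 1 n, rimWeight n M ℓ :=
  sum_comm

lemma rimWeight_eq (ℓ : ℕ) :
    rimWeight n M ℓ = (min (n - 1) (iLab n M ℓ) + 1 - max 1 (kLab n M ℓ)) +
      (min (n - 1) (jLab n M ℓ) + 1 - max 1 (kLab n M ℓ + 1)) := by
  simp only [rimWeight, sum_add_distrib, sum_boole, card_filter_Icc_and, Nat.cast_id]

variable {n M}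

lemma IsMatching.rimWeight_le_card_rimM_and_even (hM : IsMatching n M) {ℓ : ℕ} (hℓ : 1 ≤ ℓ) :
    rimWeight n M ℓ ≤ #(rimM n M ℓ) ∧ Even (#(rimM n M ℓ) - rimWeight n M ℓ) := by
  obtain ⟨L, rfl⟩ : ∃ L, ℓ = L + 1 := ⟨ℓ - 1, by omega⟩
  set D := peelRims (cellsM n M) L
  have hD : IsDiagram D := isDiagram_peelRims (isDiagram_cellsM n M) L
  have hrim : rimM n M (L + 1) = outerRim D := rimM_succ_eq_outerRim_peelRims n M L
  rw [rimWeight_eq]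
  rcases D.eq_empty_or_nonempty with hempty | hne
  · have hk : kLab n M (L + 1) = n + 1 := by simp [kLab, hrim, hempty, outerRim]
    rw [hk, hrim, hempty, outerRim, filter_empty, card_empty]
    exact ⟨by omega, by simp⟩
  set R := D.sup Prod.fst
  set A := D.sup Prod.snd
  set m := (outerRim D).sup fun u => u.1 + u.2
  have hi : iLab n M (L + 1) = n - R := by rw [iLab, hrim, hD.sup_label_bottom_outerRim hne]
  have hj : jLab n M (L + 1) = n - A := by rw [jLab, hrim, hD.sup_label_top_outerRim hne]
  have hk : kLab n M (L + 1) = n + 1 - m := by rw [kLab, hrim]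
  have hcard : #(outerRim D) + 1 = R + A := hD.card_outerRim_add_one hne
  have hR1 : 1 ≤ R := (hD.one_le _ (mem_filter.1 (hD.sup_fst_one_mem_outerRim hne)).1).1
  have hRm : R + 1 ≤ m := le_sup (f := fun u : ℕ × ℕ => u.1 + u.2) (hD.sup_fst_one_mem_outerRim hne)
  have hAm : 1 + A ≤ m := le_sup (f := fun u : ℕ × ℕ => u.1 + u.2) (hD.one_sup_snd_mem_outerRim hne)
  have hmRA : m ≤ R + A := sup_add_outerRim_le D
  have hmn : m ≤ n :=
    Finset.sup_le fun u hu => hM.add_le_of_mem_cellsM (mem_filter.1 (mem_filter.1 hu).1).1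
  rw [hi, hj, hk, hrim]
  exact ⟨by omega, ⟨R + A - m, by omega⟩⟩

end RimWeight

/-- The total Rule-B multiplicity is at most `d(π)` (the number of boxes of `Y(π)`),
and the difference is even. -/
theorem sum_multiplicities_le_card_and_even (n : ℕ) (M : Finset (ℕ × ℕ))
    (hM : IsMatching n M) :
    (∑ p ∈ Finset.Icc 1 (n - 1), mB n M p) ≤ (cellsM n M).card ∧
    Even ((cellsM n M).card - ∑ p ∈ Finset.Icc 1 (n - 1), mB n M p) := by
  have hrim (ℓ : ℕ) (hℓ : ℓ ∈ Icc 1 n) :=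
    hM.rimWeight_le_card_rimM_and_even (mem_Icc.1 hℓ).1
  rw [sum_mB_eq_sum_rimWeight, card_cellsM_eq_sum_card_rimM]
  refine ⟨sum_le_sum fun ℓ hℓ => (hrim ℓ hℓ).1, ?_⟩
  rw [← sum_tsub_distrib _ fun ℓ hℓ => (hrim ℓ hℓ).1]
  exact even_sum _ fun ℓ hℓ => (hrim ℓ hℓ).2
end

section
/- Let a_1 < ... < a_n be positive integers with a_i ≤ 2i - 1, not all equal to i (i.e., the Young diagram Y(a) is nonempty). For an integer p with 1 - n ≤ p ≤ -1, if the sequence (a_i) does not satisfy a_{|p|+1} = |p| + 1, then the determinant D(p) = det( binom(p + i - 1, a_i - j) )_{1≤i,j≤n} vanishes. -/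
/-- The generalized binomial coefficient `r choose k` for integer `r`, as a rational:
`r(r-1)⋯(r-k+1)/k!`. -/
def zchoose (r : ℤ) (k : ℕ) : ℚ :=
  (∏ s ∈ Finset.range k, ((r : ℚ) - s)) / (k.factorial : ℚ)

lemma zchoose_nat_eq_zero (m k : ℕ) (h : m < k) : zchoose (m : ℤ) k = 0 := by
  unfold zchoose
  rw [Finset.prod_eq_zero (Finset.mem_range.2 h) (by push_cast; ring), zero_div]

/-- For `a₁ < ⋯ < aₙ` positive with `aᵢ ≤ 2i - 1`, not all `aᵢ = i`, and an integer
`p` with `1 - n ≤ p ≤ -1` such that `a_{|p|+1} ≠ |p| + 1`, the determinant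
`det(binom(p+i-1, aᵢ-j))` vanishes. (Binomials with negative lower index are `0`.) -/
theorem det_vanishes_at_negative (n : ℕ) (a : Fin n → ℕ) (ha : StrictMono a)
    (h1 : ∀ i, 1 ≤ a i) (h2 : ∀ i : Fin n, a i ≤ 2 * (i : ℕ) + 1)
    (hne : ∃ i : Fin n, a i ≠ (i : ℕ) + 1)
    (p : ℤ) (hp1 : 1 - (n : ℤ) ≤ p) (hp2 : p ≤ -1)
    (hnotnested : ∀ i : Fin n, (i : ℕ) = (-p).toNat → a i ≠ (i : ℕ) + 1) :
    Matrix.det (Matrix.of fun i j : Fin n =>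
      if (j : ℕ) + 1 ≤ a i then zchoose (p + (i : ℕ)) (a i - ((j : ℕ) + 1))
      else 0) = 0 := by
  have hn : 0 < n := by
    obtain ⟨i, _⟩ := hne; exact i.pos
  set q : ℕ := (-p).toNat with hq
  have hpq : (q : ℤ) = -p := Int.toNat_of_nonneg (by omega)
  have hqn : q < n := by omega
  set iq : Fin n := ⟨q, hqn⟩ with hiqdef
  have hiq : (iq : ℕ) = q := rfl
  -- strict mono gap lemma
  have gap : ∀ d : ℕ, ∀ i j : Fin n, (j : ℕ) = (i : ℕ) + d → a i + d ≤ a j := by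
    intro d
    induction d with
    | zero =>
      intro i j h
      have : i = j := Fin.ext (by omega)
      simp [this]
    | succ d ih =>
      intro i j h
      have hjlt := j.isLt
      have hj' : (i : ℕ) + d < n := by omega
      have h1' := ih i ⟨(i : ℕ) + d, hj'⟩ rfl
      have hlt : (⟨(i : ℕ) + d, hj'⟩ : Fin n) < j := by
        rw [Fin.lt_def]; simp; omega
      have h2' := ha hlt
      omega
  have L1 : ∀ j : Fin n, (j : ℕ) + 1 ≤ a j := by
    intro j
    have hg := gap (j : ℕ) ⟨0, hn⟩ j (by simp)
    have h0 := h1 ⟨0, hn⟩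
    omega
  have haq : q + 2 ≤ a iq := by
    have h1q := L1 iq
    have hne' := hnotnested iq hq
    rw [hiq] at h1q hne'
    omega
  have hrow : ∀ r : Fin n, q ≤ (r : ℕ) → (r : ℕ) + 2 ≤ a r := by
    intro r hr
    have hg := gap ((r : ℕ) - q) iq r (by rw [hiq]; omega)
    omega
  have hzero : ∀ r c : Fin n, q ≤ (r : ℕ) → (c : ℕ) ≤ q →
      (if (c : ℕ) + 1 ≤ a r then zchoose (p + (r : ℕ)) (a r - ((c : ℕ) + 1)) else 0) = 0 := by
    intro r c hr hc
    split
    · have hval : p + ((r : ℕ) : ℤ) = (((r : ℕ) - q : ℕ) : ℤ) := by omega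
      rw [hval]
      apply zchoose_nat_eq_zero
      have := hrow r hr
      omega
    · rfl
  rw [Matrix.det_apply']
  apply Finset.sum_eq_zero
  intro σ _
  have hex : ∃ c : Fin n, (c : ℕ) ≤ q ∧ q ≤ ((σ c : Fin n) : ℕ) := by
    by_contra hcon
    push_neg at hcon
    have hsub : (Finset.Iic iq).image σ ⊆ Finset.Iio iq := by
      intro r hr
      simp only [Finset.mem_image] at hr
      obtain ⟨c, hc, rfl⟩ := hr
      have hc' : (c : ℕ) ≤ q := by
        have := Finset.mem_Iic.1 hc
        rw [Fin.le_def] at this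
        omega
      have := hcon c hc'
      rw [Finset.mem_Iio, Fin.lt_def]
      omega
    have hcard := Finset.card_le_card hsub
    rw [Finset.card_image_of_injective _ σ.injective, Fin.card_Iic, Fin.card_Iio] at hcard
    omega
  obtain ⟨c, hc1, hc2⟩ := hex
  rw [mul_eq_zero]
  right
  apply Finset.prod_eq_zero (Finset.mem_univ c)
  simpa using hzero (σ c) c hc2 hc1
end
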